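/- arXiv:2104.03096 — 4 statements merged into one kernel-verified Lean document; each statement's English description precedes it below -/
import Mathlib

section
/- Fractional Grönwall–Bellman inequality (base form): Let T > 0, α ∈ (0,1), and a, b > 0. Let u ∈ L¹(0,T) be nonnegative almost everywhere and suppose that u(t) ≤ a + b (g_α * u)(t) for almost every t ∈ (0,T). Then there exists a constant C, depending only on α, b and T (and not on a or u), such that u(t) ≤ a·C for almost every t ∈ (0,T). -/
/-!
Work with `U = ofReal ∘ u` in `ℝ≥0∞`, where the convolution `volterra k U t = ∫₀ᵗ k(t-s) U(s) ds`
is monotone in `U` and associative by Tonelli. The Riemann–Liouville kernels form a convolution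
semigroup, `g_α * g_β = g_{α+β}` (this is the Beta integral), so substituting the inequality into
itself `n` times gives `U ≤ a D + b^{n+1} g_{(n+1)α} * U`, and once `(n+1)α ≥ 1` this kernel is
bounded on `(0, T)`. It remains to bound `∫₀ᵀ U`: choose `ρ` so large that
`∫₀ᵀ e^{-ρτ} b g_α(τ) dτ ≤ 1/2`; then the weighted integral `J = ∫₀ᵀ e^{-ρt} U(t) dt`, finite
because `u` is integrable, satisfies `J ≤ a T + J / 2`.
-/

open MeasureTheory Set

/-- The Riemann–Liouville kernel `g_α(t) = t^(α-1)/Γ(α)`. -/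
noncomputable def rlKernel (α t : ℝ) : ℝ := t ^ (α - 1) / Real.Gamma α

/-- Convolution on the half line: `(f * h)(t) = ∫₀ᵗ f(t-s) h(s) ds`. -/
noncomputable def conv (f h : ℝ → ℝ) (t : ℝ) : ℝ := ∫ s in (0:ℝ)..t, f (t - s) * h s

open Filter Topology
open scoped ENNReal

lemma ofReal_integral_le_lintegral_ofReal {α : Type*} [MeasurableSpace α] {μ : Measure α}
    (f : α → ℝ) : ENNReal.ofReal (∫ a, f a ∂μ) ≤ ∫⁻ a, ENNReal.ofReal (f a) ∂μ := by
  by_cases hf : Integrable f μ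
  · rw [integral_eq_lintegral_pos_part_sub_lintegral_neg_part hf]
    exact (ENNReal.ofReal_le_ofReal (sub_le_self _ ENNReal.toReal_nonneg)).trans
      ENNReal.ofReal_toReal_le
  · simp [integral_undef hf]

lemma setLIntegral_Ioo_comp_sub_right (g : ℝ → ℝ≥0∞) (a b c : ℝ) :
    ∫⁻ s in Ioo a b, g (s - c) = ∫⁻ s in Ioo (a - c) (b - c), g s := by
  rw [(measurePreserving_sub_right volume c).setLIntegral_comp_emb
    (MeasurableEquiv.subRight c).measurableEmbedding, image_sub_const_Ioo]

lemma setLIntegral_Ioo_comp_const_sub (g : ℝ → ℝ≥0∞) (a b c : ℝ) :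
    ∫⁻ s in Ioo a b, g (c - s) = ∫⁻ s in Ioo (c - b) (c - a), g s := by
  rw [(Measure.measurePreserving_sub_left volume c).setLIntegral_comp_emb
    (MeasurableEquiv.subLeft c).measurableEmbedding, image_const_sub_Ioo]

lemma setLIntegral_Ioo_rpow_mul_one_sub_rpow {α β : ℝ} (hα : 0 < α) (hβ : 0 < β) :
    ∫⁻ x in Ioo 0 1, ENNReal.ofReal (x ^ (α - 1) * (1 - x) ^ (β - 1)) =
      ENNReal.ofReal (ProbabilityTheory.beta α β) := by
  have hB := ProbabilityTheory.beta_pos hα hβ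
  have h := ProbabilityTheory.lintegral_betaPDF_eq_one hα hβ
  rw [ProbabilityTheory.lintegral_betaPDF] at h
  simp_rw [mul_assoc, ENNReal.ofReal_mul (one_div_pos.2 hB).le] at h
  rw [lintegral_const_mul' _ _ ENNReal.ofReal_ne_top] at h
  rw [← mul_one (ENNReal.ofReal _), ← h, ← mul_assoc, ← ENNReal.ofReal_mul hB.le,
    mul_one_div_cancel hB.ne', ENNReal.ofReal_one, one_mul]

lemma setLIntegral_Ioo_rpow_mul_sub_rpow {α β τ : ℝ} (hα : 0 < α) (hβ : 0 < β) (hτ : 0 < τ) :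
    ∫⁻ s in Ioo 0 τ, ENNReal.ofReal (s ^ (α - 1) * (τ - s) ^ (β - 1)) =
      ENNReal.ofReal (ProbabilityTheory.beta α β * τ ^ (α + β - 1)) := by
  have himage : (τ * ·) '' Ioo 0 1 = Ioo 0 τ := by
    rw [image_mul_left_Ioo hτ, mul_zero, mul_one]
  rw [← himage, lintegral_image_eq_lintegral_abs_deriv_mul measurableSet_Ioo
    (fun x _ => (hasDerivAt_const_mul τ).hasDerivWithinAt) (mul_right_injective₀ hτ.ne').injOn]
  have hpoint : ∀ x ∈ Ioo (0:ℝ) 1,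
      ENNReal.ofReal |τ| * ENNReal.ofReal ((τ * x) ^ (α - 1) * (τ - τ * x) ^ (β - 1)) =
        ENNReal.ofReal (τ ^ (α + β - 1)) * ENNReal.ofReal (x ^ (α - 1) * (1 - x) ^ (β - 1)) := by
    intro x hx
    rw [← ENNReal.ofReal_mul (abs_nonneg _), ← ENNReal.ofReal_mul (by positivity), ← mul_one_sub,
      Real.mul_rpow hτ.le hx.1.le, Real.mul_rpow hτ.le (by linarith [hx.2]), abs_of_pos hτ,
      show α + β - 1 = 1 + (α - 1) + (β - 1) by ring, Real.rpow_add hτ, Real.rpow_add hτ,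
      Real.rpow_one]
    ring_nf
  rw [setLIntegral_congr_fun measurableSet_Ioo hpoint,
    lintegral_const_mul' _ _ ENNReal.ofReal_ne_top, setLIntegral_Ioo_rpow_mul_one_sub_rpow hα hβ,
    ← ENNReal.ofReal_mul (by positivity), mul_comm]

noncomputable def volterra (k U : ℝ → ℝ≥0∞) (t : ℝ) : ℝ≥0∞ := ∫⁻ s in Ioo 0 t, k (t - s) * U s

theorem setLIntegral_mul_volterra {X : ℝ} {w k V : ℝ → ℝ≥0∞} (hw : Measurable w)
    (hk : Measurable k) (hV : Measurable V) :
    ∫⁻ s in Ioo 0 X, w s * volterra k V s =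
      ∫⁻ r in Ioo 0 X, V r * ∫⁻ s in Ioo r X, w s * k (s - r) := by
  let F : ℝ → ℝ → ℝ≥0∞ := fun s r => (Iio s).indicator (fun r => w s * (k (s - r) * V r)) r
  have hF : Measurable (Function.uncurry F) :=
    Measurable.ite (measurableSet_lt measurable_snd measurable_fst) (by fun_prop) measurable_const
  calc ∫⁻ s in Ioo 0 X, w s * volterra k V s = ∫⁻ s in Ioo 0 X, ∫⁻ r in Ioo 0 X, F s r := by
        refine setLIntegral_congr_fun measurableSet_Ioo fun s hs => ?_
        rw [setLIntegral_indicator measurableSet_Iio, Iio_inter_Ioo, min_eq_left hs.2.le,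
          volterra, lintegral_const_mul _ (by fun_prop)]
    _ = ∫⁻ r in Ioo 0 X, ∫⁻ s in Ioo 0 X, F s r := lintegral_lintegral_swap hF.aemeasurable
    _ = ∫⁻ r in Ioo 0 X, V r * ∫⁻ s in Ioo r X, w s * k (s - r) := by
        refine setLIntegral_congr_fun measurableSet_Ioo fun r hr => ?_
        change ∫⁻ s in Ioo 0 X, (Ioi r).indicator (fun s => w s * (k (s - r) * V r)) s = _
        rw [setLIntegral_indicator measurableSet_Ioi, Ioi_inter_Ioo, max_eq_left hr.1.le,
          ← lintegral_const_mul _ (by fun_prop)]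
        simp only [mul_comm (V r), mul_assoc]

theorem volterra_volterra {k l U : ℝ → ℝ≥0∞} (hk : Measurable k) (hl : Measurable l)
    (hU : Measurable U) (t : ℝ) :
    volterra k (volterra l U) t = volterra (volterra k l) U t := by
  rw [volterra, setLIntegral_mul_volterra (by fun_prop) hl hU, volterra]
  refine setLIntegral_congr_fun measurableSet_Ioo fun r _ => ?_
  have hshift := setLIntegral_Ioo_comp_sub_right (fun σ => k (t - r - σ) * l σ) r t r
  simp only [sub_sub_sub_cancel_right, sub_self] at hshift
  rw [mul_comm, volterra, ← hshift]

section VolterraInequality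

variable {T : ℝ} {k l U V : ℝ → ℝ≥0∞} {A A' : ℝ≥0∞}

lemma volterra_mono {t : ℝ} (h : ∀ᵐ s ∂volume.restrict (Ioo 0 t), U s ≤ V s) :
    volterra k U t ≤ volterra k V t :=
  lintegral_mono_ae (h.mono fun _ hs => by gcongr)

lemma volterra_congr_kernel {t : ℝ} {k' : ℝ → ℝ≥0∞} (h : ∀ τ ∈ Ioo 0 t, k τ = k' τ) :
    volterra k U t = volterra k' U t :=
  setLIntegral_congr_fun measurableSet_Ioo fun s hs => by
    rw [h (t - s) ⟨sub_pos.2 hs.2, sub_lt_self t hs.1⟩]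

lemma volterra_le_mul_setLIntegral {t : ℝ} {M : ℝ≥0∞} (hU : Measurable U)
    (h : ∀ τ ∈ Ioo 0 t, k τ ≤ M) : volterra k U t ≤ M * ∫⁻ s in Ioo 0 t, U s := by
  rw [← lintegral_const_mul M hU]
  refine lintegral_mono_ae ((ae_restrict_mem measurableSet_Ioo).mono fun s hs => ?_)
  gcongr
  exact h _ ⟨sub_pos.2 hs.2, sub_lt_self t hs.1⟩

lemma volterra_const_add (hk : Measurable k) (t : ℝ) :
    volterra k (fun s => A + U s) t = A * (∫⁻ τ in Ioo 0 t, k τ) + volterra k U t := by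
  simp only [volterra, mul_add]
  rw [lintegral_add_left (by fun_prop), lintegral_mul_const _ (by fun_prop), mul_comm,
    setLIntegral_Ioo_comp_const_sub k, sub_self, sub_zero]

theorem ae_le_add_volterra_volterra (hk : Measurable k) (hl : Measurable l) (hU : Measurable U)
    (h₁ : ∀ᵐ t ∂volume.restrict (Ioo 0 T), U t ≤ A + volterra k U t)
    (h₂ : ∀ᵐ t ∂volume.restrict (Ioo 0 T), U t ≤ A' + volterra l U t) :
    ∀ᵐ t ∂volume.restrict (Ioo 0 T),
      U t ≤ A + A' * (∫⁻ τ in Ioo 0 T, k τ) + volterra (volterra k l) U t := by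
  filter_upwards [h₁, ae_restrict_mem measurableSet_Ioo] with t ht htT
  have hsub : Ioo 0 t ⊆ Ioo 0 T := Ioo_subset_Ioo_right htT.2.le
  calc U t ≤ A + volterra k U t := ht
    _ ≤ A + volterra k (fun s => A' + volterra l U s) t := by
        gcongr
        exact volterra_mono (ae_restrict_of_ae_restrict_of_subset hsub h₂)
    _ = A + A' * (∫⁻ τ in Ioo 0 t, k τ) + volterra (volterra k l) U t := by
        rw [volterra_const_add hk, volterra_volterra hk hl hU, add_assoc]
    _ ≤ A + A' * (∫⁻ τ in Ioo 0 T, k τ) + volterra (volterra k l) U t := by gcongr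

end VolterraInequality

theorem exists_setLIntegral_exp_mul_lt {T : ℝ} {k : ℝ → ℝ≥0∞} (hk : Measurable k)
    (hk_fin : ∫⁻ τ in Ioo 0 T, k τ ≠ ∞) {ε : ℝ≥0∞} (hε : 0 < ε) :
    ∃ ρ : ℕ, ∫⁻ τ in Ioo 0 T, ENNReal.ofReal (Real.exp (-(ρ * τ))) * k τ < ε := by
  have hlim : Tendsto (fun ρ : ℕ => ∫⁻ τ in Ioo 0 T, ENNReal.ofReal (Real.exp (-(ρ * τ))) * k τ)
      atTop (𝓝 (∫⁻ _ in Ioo 0 T, 0)) := by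
    refine tendsto_lintegral_of_dominated_convergence k (fun _ => by fun_prop) (fun ρ => ?_)
      hk_fin ?_
    · filter_upwards [ae_restrict_mem measurableSet_Ioo] with τ hτ
      refine mul_le_of_le_one_left zero_le (ENNReal.ofReal_le_one.2 ?_)
      exact Real.exp_le_one_iff.2 (neg_nonpos.2 (mul_nonneg (Nat.cast_nonneg _) hτ.1.le))
    · filter_upwards [ae_lt_top hk hk_fin, ae_restrict_mem measurableSet_Ioo] with τ hkτ hτ
      rw [← zero_mul (k τ), ← ENNReal.ofReal_zero]
      refine ENNReal.Tendsto.mul_const (ENNReal.tendsto_ofReal ?_) (Or.inr hkτ.ne)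
      refine Real.tendsto_exp_atBot.comp (tendsto_neg_atTop_atBot.comp ?_)
      exact tendsto_natCast_atTop_atTop.atTop_mul_const hτ.1
  rw [lintegral_zero] at hlim
  exact (hlim.eventually (gt_mem_nhds hε)).exists

lemma setLIntegral_Ioo_exp_mul_comp_sub_le {T ρ r : ℝ} {k : ℝ → ℝ≥0∞} (hk : Measurable k)
    (hr : 0 ≤ r) :
    ∫⁻ s in Ioo r T, ENNReal.ofReal (Real.exp (-(ρ * s))) * k (s - r) ≤
      ENNReal.ofReal (Real.exp (-(ρ * r))) *
        ∫⁻ τ in Ioo 0 T, ENNReal.ofReal (Real.exp (-(ρ * τ))) * k τ := by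
  have hfactor : ∀ s, ENNReal.ofReal (Real.exp (-(ρ * s))) * k (s - r) =
      ENNReal.ofReal (Real.exp (-(ρ * r))) *
        (ENNReal.ofReal (Real.exp (-(ρ * (s - r)))) * k (s - r)) := fun s => by
    rw [← mul_assoc, ← ENNReal.ofReal_mul (Real.exp_pos _).le, ← Real.exp_add]
    ring_nf
  simp_rw [hfactor]
  rw [lintegral_const_mul _ (by fun_prop),
    setLIntegral_Ioo_comp_sub_right (fun τ => ENNReal.ofReal (Real.exp (-(ρ * τ))) * k τ),
    sub_self]
  gcongr
  exact sub_le_self T hr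

theorem setLIntegral_exp_mul_le_of_ae_le_add_volterra {T ρ : ℝ} {k U : ℝ → ℝ≥0∞} {A : ℝ≥0∞}
    (hρ : 0 ≤ ρ) (hk : Measurable k) (hU : Measurable U)
    (hkρ : ∫⁻ τ in Ioo 0 T, ENNReal.ofReal (Real.exp (-(ρ * τ))) * k τ ≤ 2⁻¹)
    (hU_fin : ∫⁻ t in Ioo 0 T, U t ≠ ∞)
    (h : ∀ᵐ t ∂volume.restrict (Ioo 0 T), U t ≤ A + volterra k U t) :
    ∫⁻ t in Ioo 0 T, ENNReal.ofReal (Real.exp (-(ρ * t))) * U t ≤ 2 * (A * volume (Ioo 0 T)) := by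
  set w : ℝ → ℝ≥0∞ := fun t => ENNReal.ofReal (Real.exp (-(ρ * t)))
  have hw : Measurable w := by fun_prop
  have hw_le_one : ∀ t ∈ Ioo 0 T, w t ≤ 1 := fun t ht =>
    ENNReal.ofReal_le_one.2 (Real.exp_le_one_iff.2 (neg_nonpos.2 (mul_nonneg hρ ht.1.le)))
  set J := ∫⁻ t in Ioo 0 T, w t * U t
  have hJ_fin : J ≠ ∞ := ne_top_of_le_ne_top hU_fin <| lintegral_mono_ae <|
    (ae_restrict_mem measurableSet_Ioo).mono fun t ht =>
      mul_le_of_le_one_left zero_le (hw_le_one t ht)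
  have hinner : ∀ r ∈ Ioo 0 T, ∫⁻ s in Ioo r T, w s * k (s - r) ≤ w r * 2⁻¹ := fun r hr =>
    (setLIntegral_Ioo_exp_mul_comp_sub_le hk hr.1.le).trans (by gcongr)
  have hJ : J ≤ A * volume (Ioo 0 T) + J / 2 := calc
    J ≤ ∫⁻ t in Ioo 0 T, (w t * A + w t * volterra k U t) :=
        lintegral_mono_ae (h.mono fun t ht => by rw [← mul_add]; gcongr)
    _ = (∫⁻ t in Ioo 0 T, w t * A) + ∫⁻ t in Ioo 0 T, w t * volterra k U t :=
        lintegral_add_left (by fun_prop) _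
    _ ≤ (∫⁻ _ in Ioo 0 T, A) + ∫⁻ r in Ioo 0 T, U r * (w r * 2⁻¹) := by
        rw [setLIntegral_mul_volterra hw hk hU]
        gcongr ?_ + ?_
        · exact setLIntegral_mono measurable_const fun t ht =>
            mul_le_of_le_one_left zero_le (hw_le_one t ht)
        · exact setLIntegral_mono (by fun_prop) fun r hr => by gcongr; exact hinner r hr
    _ = A * volume (Ioo 0 T) + J / 2 := by
        rw [setLIntegral_const, mul_comm, div_eq_mul_inv, ← lintegral_mul_const _ (by fun_prop)]
        simp only [mul_comm, mul_left_comm]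
  have hhalf : J / 2 ≤ A * volume (Ioo 0 T) := by
    refine ENNReal.le_of_add_le_add_right (ENNReal.div_ne_top hJ_fin two_ne_zero) ?_
    rwa [ENNReal.add_halves]
  rwa [ENNReal.div_le_iff two_ne_zero ENNReal.ofNat_ne_top, mul_comm] at hhalf

theorem exists_setLIntegral_le_of_ae_le_add_volterra {T : ℝ} {k : ℝ → ℝ≥0∞} (hk : Measurable k)
    (hk_fin : ∫⁻ τ in Ioo 0 T, k τ ≠ ∞) :
    ∃ K : ℝ≥0∞, K ≠ ∞ ∧ ∀ (A : ℝ≥0∞) (U : ℝ → ℝ≥0∞), Measurable U →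
      ∫⁻ t in Ioo 0 T, U t ≠ ∞ →
      (∀ᵐ t ∂volume.restrict (Ioo 0 T), U t ≤ A + volterra k U t) →
      ∫⁻ t in Ioo 0 T, U t ≤ A * K := by
  obtain ⟨ρ, hρ⟩ := exists_setLIntegral_exp_mul_lt hk hk_fin (by simp : (0 : ℝ≥0∞) < 2⁻¹)
  refine ⟨ENNReal.ofReal (Real.exp (ρ * T)) * (2 * volume (Ioo 0 T)),
    by rw [Real.volume_Ioo]; finiteness, fun A U hU hU_fin h => ?_⟩
  calc ∫⁻ t in Ioo 0 T, U t ≤ ∫⁻ t in Ioo 0 T,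
        ENNReal.ofReal (Real.exp (ρ * T)) * (ENNReal.ofReal (Real.exp (-(ρ * t))) * U t) := by
        refine setLIntegral_mono (by fun_prop) fun t ht => ?_
        rw [← mul_assoc, ← ENNReal.ofReal_mul (Real.exp_pos _).le, ← Real.exp_add]
        refine le_mul_of_one_le_left zero_le (ENNReal.one_le_ofReal.2 (Real.one_le_exp ?_))
        nlinarith [ht.2, (Nat.cast_nonneg ρ : (0 : ℝ) ≤ ρ)]
    _ = ENNReal.ofReal (Real.exp (ρ * T)) *
          ∫⁻ t in Ioo 0 T, ENNReal.ofReal (Real.exp (-(ρ * t))) * U t :=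
        lintegral_const_mul' _ _ ENNReal.ofReal_ne_top
    _ ≤ ENNReal.ofReal (Real.exp (ρ * T)) * (2 * (A * volume (Ioo 0 T))) := by
        gcongr
        exact setLIntegral_exp_mul_le_of_ae_le_add_volterra (Nat.cast_nonneg ρ) hk hU hρ.le hU_fin h
    _ = A * (ENNReal.ofReal (Real.exp (ρ * T)) * (2 * volume (Ioo 0 T))) := by ring

lemma rlKernel_nonneg {α τ : ℝ} (hα : 0 < α) (hτ : 0 ≤ τ) : 0 ≤ rlKernel α τ :=
  div_nonneg (Real.rpow_nonneg hτ _) (Real.Gamma_pos_of_pos hα).le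

noncomputable def scaledRLKernel (c β τ : ℝ) : ℝ≥0∞ := ENNReal.ofReal (c * rlKernel β τ)

lemma measurable_scaledRLKernel (c β : ℝ) : Measurable (scaledRLKernel c β) := by
  unfold scaledRLKernel rlKernel
  fun_prop

theorem volterra_scaledRLKernel {c d α β τ : ℝ} (hc : 0 ≤ c) (hd : 0 ≤ d) (hα : 0 < α)
    (hβ : 0 < β) (hτ : 0 < τ) :
    volterra (scaledRLKernel c α) (scaledRLKernel d β) τ = scaledRLKernel (c * d) (α + β) τ := by
  have hΓα := Real.Gamma_pos_of_pos hα
  have hΓβ := Real.Gamma_pos_of_pos hβ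
  have hpoint : ∀ s ∈ Ioo 0 τ, scaledRLKernel c α (τ - s) * scaledRLKernel d β s =
      ENNReal.ofReal (c * d / (Real.Gamma α * Real.Gamma β)) *
        ENNReal.ofReal (s ^ (β - 1) * (τ - s) ^ (α - 1)) := by
    intro s hs
    have := Real.rpow_nonneg (sub_pos.2 hs.2).le (α - 1)
    have := Real.rpow_nonneg hs.1.le (β - 1)
    rw [scaledRLKernel, scaledRLKernel, rlKernel, rlKernel, ← ENNReal.ofReal_mul (by positivity),
      ← ENNReal.ofReal_mul (by positivity)]
    congr 1
    field_simp
  rw [volterra, setLIntegral_congr_fun measurableSet_Ioo hpoint,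
    lintegral_const_mul' _ _ ENNReal.ofReal_ne_top, setLIntegral_Ioo_rpow_mul_sub_rpow hβ hα hτ,
    ← ENNReal.ofReal_mul (by positivity), scaledRLKernel, rlKernel, ProbabilityTheory.beta,
    add_comm β α]
  congr 1
  field_simp

lemma scaledRLKernel_one_one : scaledRLKernel 1 1 = fun _ => 1 := by
  ext τ
  simp [scaledRLKernel, rlKernel]

theorem setLIntegral_scaledRLKernel {c β T : ℝ} (hc : 0 ≤ c) (hβ : 0 < β) (hT : 0 < T) :
    ∫⁻ τ in Ioo 0 T, scaledRLKernel c β τ = scaledRLKernel c (β + 1) T := by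
  have h := volterra_scaledRLKernel zero_le_one hc one_pos hβ hT
  rw [scaledRLKernel_one_one, one_mul, add_comm 1 β] at h
  simpa [volterra] using h

lemma setLIntegral_scaledRLKernel_lt_top {c β : ℝ} (hc : 0 ≤ c) (hβ : 0 < β) (T : ℝ) :
    ∫⁻ τ in Ioo 0 T, scaledRLKernel c β τ < ∞ := by
  refine (lintegral_mono_set (Ioo_subset_Ioo_right (le_max_left T 1))).trans_lt ?_
  rw [setLIntegral_scaledRLKernel hc hβ (lt_max_of_lt_right one_pos)]
  exact ENNReal.ofReal_lt_top

lemma scaledRLKernel_le_of_le {c β τ T : ℝ} (hc : 0 ≤ c) (hβ : 1 ≤ β) (hτ : 0 ≤ τ) (hτT : τ ≤ T) :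
    scaledRLKernel c β τ ≤ scaledRLKernel c β T := by
  have := Real.Gamma_pos_of_pos (zero_lt_one.trans_le hβ)
  unfold scaledRLKernel rlKernel
  gcongr

theorem exists_ae_le_mul_add_volterra_scaledRLKernel (T : ℝ) {b α : ℝ} (hb : 0 ≤ b)
    (hα : 0 < α) (n : ℕ) :
    ∃ D : ℝ≥0∞, D ≠ ∞ ∧ ∀ (A : ℝ≥0∞) (U : ℝ → ℝ≥0∞), Measurable U →
      (∀ᵐ t ∂volume.restrict (Ioo 0 T), U t ≤ A + volterra (scaledRLKernel b α) U t) →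
      ∀ᵐ t ∂volume.restrict (Ioo 0 T),
        U t ≤ A * D + volterra (scaledRLKernel (b ^ (n + 1)) ((n + 1) * α)) U t := by
  induction n with
  | zero => exact ⟨1, ENNReal.one_ne_top, fun A U _ h => by simpa using h⟩
  | succ n ih =>
    obtain ⟨D, hD, hiter⟩ := ih
    refine ⟨1 + D * ∫⁻ τ in Ioo 0 T, scaledRLKernel b α τ,
      by finiteness [(setLIntegral_scaledRLKernel_lt_top hb hα T).ne], fun A U hU h => ?_⟩
    filter_upwards [ae_le_add_volterra_volterra (measurable_scaledRLKernel b α)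
      (measurable_scaledRLKernel _ _) hU h (hiter A U hU h)] with t ht
    have hkernel : ∀ τ ∈ Ioo 0 t, volterra (scaledRLKernel b α)
        (scaledRLKernel (b ^ (n + 1)) ((n + 1) * α)) τ =
          scaledRLKernel (b ^ (n + 1 + 1)) ((↑(n + 1) + 1) * α) τ := by
      intro τ hτ
      rw [volterra_scaledRLKernel hb (pow_nonneg hb _) hα (by positivity) hτ.1]
      congr 1 <;> push_cast <;> ring
    rw [volterra_congr_kernel hkernel] at ht
    exact ht.trans_eq (by ring)

theorem exists_ae_le_mul_of_ae_le_add_volterra_scaledRLKernel (T : ℝ) {b α : ℝ} (hb : 0 ≤ b)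
    (hα : 0 < α) :
    ∃ C : ℝ≥0∞, C ≠ ∞ ∧ ∀ (A : ℝ≥0∞) (U : ℝ → ℝ≥0∞), Measurable U →
      ∫⁻ t in Ioo 0 T, U t ≠ ∞ →
      (∀ᵐ t ∂volume.restrict (Ioo 0 T), U t ≤ A + volterra (scaledRLKernel b α) U t) →
      ∀ᵐ t ∂volume.restrict (Ioo 0 T), U t ≤ A * C := by
  obtain ⟨K, hK, hL1⟩ := exists_setLIntegral_le_of_ae_le_add_volterra
    (measurable_scaledRLKernel b α) (setLIntegral_scaledRLKernel_lt_top hb hα T).ne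
  obtain ⟨n, hn⟩ := exists_nat_ge α⁻¹
  have hnα : 1 ≤ (n + 1) * α := by
    rw [inv_le_iff_one_le_mul₀ hα] at hn
    nlinarith
  obtain ⟨D, hD, hiter⟩ := exists_ae_le_mul_add_volterra_scaledRLKernel T hb hα n
  set M := scaledRLKernel (b ^ (n + 1)) ((n + 1) * α) T
  refine ⟨D + M * K, ENNReal.add_ne_top.2 ⟨hD, ENNReal.mul_ne_top ENNReal.ofReal_ne_top hK⟩,
    fun A U hU hU_fin h => ?_⟩
  filter_upwards [hiter A U hU h, ae_restrict_mem measurableSet_Ioo] with t ht htT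
  calc U t ≤ A * D + volterra (scaledRLKernel (b ^ (n + 1)) ((n + 1) * α)) U t := ht
    _ ≤ A * D + M * ∫⁻ s in Ioo 0 T, U s := by
        gcongr
        refine (volterra_le_mul_setLIntegral hU fun τ hτ => ?_).trans
          (by gcongr; exact htT.2.le)
        exact scaledRLKernel_le_of_le (pow_nonneg hb _) hnα hτ.1.le (hτ.2.trans htT.2).le
    _ ≤ A * D + M * (A * K) := by gcongr; exact hL1 A U hU hU_fin h
    _ = A * (D + M * K) := by ring

lemma ofReal_mul_conv_rlKernel_le {α b t : ℝ} {u v : ℝ → ℝ} (hb : 0 ≤ b) (hα : 0 < α)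
    (ht : 0 ≤ t) (huv : u =ᵐ[volume.restrict (Ioo 0 t)] v) :
    ENNReal.ofReal (b * conv (rlKernel α) u t) ≤
      volterra (scaledRLKernel b α) (fun s => ENNReal.ofReal (v s)) t := by
  rw [conv, intervalIntegral.integral_of_le ht, integral_Ioc_eq_integral_Ioo,
    ← integral_const_mul]
  refine (ofReal_integral_le_lintegral_ofReal _).trans (lintegral_mono_ae ?_)
  filter_upwards [huv, ae_restrict_mem measurableSet_Ioo] with s hsv hs
  rw [← hsv, ← mul_assoc, scaledRLKernel,
    ENNReal.ofReal_mul (mul_nonneg hb (rlKernel_nonneg hα (sub_pos.2 hs.2).le))]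

theorem ae_ofReal_le_add_volterra_scaledRLKernel {T α a b : ℝ} {u v : ℝ → ℝ} (hb : 0 ≤ b)
    (hα : 0 < α) (huv : u =ᵐ[volume.restrict (Ioo 0 T)] v)
    (h : ∀ᵐ t ∂volume.restrict (Ioo 0 T), u t ≤ a + b * conv (rlKernel α) u t) :
    ∀ᵐ t ∂volume.restrict (Ioo 0 T), ENNReal.ofReal (v t) ≤
      ENNReal.ofReal a + volterra (scaledRLKernel b α) (fun s => ENNReal.ofReal (v s)) t := by
  filter_upwards [h, huv, ae_restrict_mem measurableSet_Ioo] with t ht htv htT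
  rw [← htv]
  calc ENNReal.ofReal (u t) ≤ ENNReal.ofReal a + ENNReal.ofReal (b * conv (rlKernel α) u t) :=
        (ENNReal.ofReal_le_ofReal ht).trans ENNReal.ofReal_add_le
    _ ≤ _ := by
        gcongr
        exact ofReal_mul_conv_rlKernel_le hb hα htT.1.le
          (ae_restrict_of_ae_restrict_of_subset (Ioo_subset_Ioo_right htT.2.le) huv)

theorem fractional_gronwall_bellman_general
    (T α b : ℝ) (hα : α ∈ Set.Ioo (0:ℝ) 1) (hb : 0 < b) :
    ∃ C : ℝ, ∀ (a : ℝ) (u : ℝ → ℝ), 0 < a →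
      MeasureTheory.IntegrableOn u (Set.Ioo 0 T) →
      (∀ᵐ t ∂(MeasureTheory.volume.restrict (Set.Ioo 0 T)), 0 ≤ u t) →
      (∀ᵐ t ∂(MeasureTheory.volume.restrict (Set.Ioo 0 T)),
        u t ≤ a + b * conv (rlKernel α) u t) →
      (∀ᵐ t ∂(MeasureTheory.volume.restrict (Set.Ioo 0 T)), u t ≤ a * C) := by
  obtain ⟨C, hC, hgronwall⟩ :=
    exists_ae_le_mul_of_ae_le_add_volterra_scaledRLKernel T hb.le hα.1
  refine ⟨C.toReal, fun a u ha hu _ h => ?_⟩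
  have hmeas := hu.aestronglyMeasurable.aemeasurable
  have huv : u =ᵐ[volume.restrict (Ioo 0 T)] hmeas.mk u := hmeas.ae_eq_mk
  have hfin : ∫⁻ t in Ioo 0 T, ENNReal.ofReal (hmeas.mk u t) ≠ ∞ :=
    (hu.congr huv).lintegral_lt_top.ne
  filter_upwards [hgronwall _ _ hmeas.measurable_mk.ennreal_ofReal hfin
    (ae_ofReal_le_add_volterra_scaledRLKernel hb.le hα.1 huv h), huv] with t ht htv
  rw [← htv, ← ENNReal.ofReal_toReal hC, ← ENNReal.ofReal_mul ha.le] at ht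
  exact (ENNReal.ofReal_le_ofReal_iff (by positivity)).1 ht

/-- Fractional Grönwall–Bellman inequality (base form). -/
theorem fractional_gronwall_bellman
    (T α b : ℝ) (hT : 0 < T) (hα : α ∈ Set.Ioo (0:ℝ) 1) (hb : 0 < b) :
    ∃ C : ℝ, ∀ (a : ℝ) (u : ℝ → ℝ), 0 < a →
      MeasureTheory.IntegrableOn u (Set.Ioo 0 T) →
      (∀ᵐ t ∂(MeasureTheory.volume.restrict (Set.Ioo 0 T)), 0 ≤ u t) →
      (∀ᵐ t ∂(MeasureTheory.volume.restrict (Set.Ioo 0 T)),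
        u t ≤ a + b * conv (rlKernel α) u t) →
      (∀ᵐ t ∂(MeasureTheory.volume.restrict (Set.Ioo 0 T)), u t ≤ a * C) :=
  fractional_gronwall_bellman_general T α b hα hb
end

section
/- Fractional Grönwall–Bellman inequality with an additional convolved term: Let T > 0, α ∈ (0,1), and a, b > 0. Let u, v ∈ L¹(0,T) be nonnegative almost everywhere and suppose that u(t) + (g_α * v)(t) ≤ a + b (g_α * u)(t) for almost every t ∈ (0,T). Then there exists a constant C, depending only on α, b and T (and not on a, u or v), such that u(t) + (g_α * v)(t) ≤ a·C for almost every t ∈ (0,T). -/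
open MeasureTheory Set

/-!
After replacing `u` by a measurable nonnegative representative and dropping the nonnegative
term `g_α * v`, it suffices to bound solutions of `u ≤ a + b (g_α * u)`. For the
`ℝ≥0∞`-valued Riemann–Liouville integrals `I^β f = g_β * f`, Tonelli and the Beta integral
give the semigroup law `I^β I^γ = I^(β+γ)` with no integrability side conditions.
Substituting the inequality into itself `n` times gives `u ≤ a A + M I^((n+1)α) u`; once
`(n+1)α ≥ 1` the kernel `g_((n+1)α)` is bounded on `[0, T]`, so `u ≤ a A + M' ∫₀ᵗ u`, and the
classical Grönwall inequality bounds `u`, hence also `g_α * u`, by a multiple of `a`.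
-/

open scoped ENNReal NNReal

lemma rlKernel_nonneg_s1 {β x : ℝ} (hβ : 0 ≤ β) (hx : 0 ≤ x) : 0 ≤ rlKernel β x :=
  div_nonneg (Real.rpow_nonneg hx _) (Real.Gamma_nonneg_of_nonneg hβ)

lemma rlKernel_one (x : ℝ) : rlKernel 1 x = 1 := by
  simp [rlKernel]

lemma rlKernel_le_rlKernel {β x y : ℝ} (hβ : 1 ≤ β) (hx : 0 ≤ x) (hxy : x ≤ y) :
    rlKernel β x ≤ rlKernel β y := by
  unfold rlKernel
  gcongr

lemma lintegral_rpow_mul_one_sub_rpow {β γ : ℝ} (hβ : 0 < β) (hγ : 0 < γ) :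
    ∫⁻ x in Ioo 0 1, ENNReal.ofReal (x ^ (γ - 1) * (1 - x) ^ (β - 1)) =
      ENNReal.ofReal (ProbabilityTheory.beta γ β) := by
  have hB := ProbabilityTheory.beta_pos hγ hβ
  have h := ProbabilityTheory.lintegral_betaPDF_eq_one hγ hβ
  rw [ProbabilityTheory.lintegral_betaPDF] at h
  simp_rw [mul_assoc, ENNReal.ofReal_mul (one_div_pos.2 hB).le] at h
  rw [lintegral_const_mul' _ _ ENNReal.ofReal_ne_top, mul_comm] at h
  rw [ENNReal.eq_inv_of_mul_eq_one_left h, one_div, ENNReal.ofReal_inv_of_pos hB, inv_inv]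

lemma lintegral_rlKernel_mul_rlKernel {β γ r t : ℝ} (hβ : 0 < β) (hγ : 0 < γ) (hrt : r < t) :
    ∫⁻ s in Ioo r t, ENNReal.ofReal (rlKernel β (t - s)) * ENNReal.ofReal (rlKernel γ (s - r)) =
      ENNReal.ofReal (rlKernel (β + γ) (t - r)) := by
  set d := t - r
  have hd : 0 < d := sub_pos.2 hrt
  have himage : (d * · + r) '' Ioo 0 1 = Ioo r t := by
    rw [image_affine_Ioo hd]; simp [d]
  have hderiv : ∀ x ∈ Ioo (0 : ℝ) 1, HasDerivWithinAt (d * · + r) d (Ioo 0 1) x := fun x _ =>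
    (((hasDerivAt_id x).const_mul d).add_const r).hasDerivWithinAt.congr_deriv (mul_one d)
  have hΓβ := Real.Gamma_pos_of_pos hβ
  have hΓγ := Real.Gamma_pos_of_pos hγ
  have hintegrand : ∀ x ∈ Ioo (0 : ℝ) 1,
      ENNReal.ofReal |d| * (ENNReal.ofReal (rlKernel β (t - (d * x + r))) *
        ENNReal.ofReal (rlKernel γ (d * x + r - r))) =
      ENNReal.ofReal (d ^ (β + γ - 1) / (Real.Gamma β * Real.Gamma γ)) *
        ENNReal.ofReal (x ^ (γ - 1) * (1 - x) ^ (β - 1)) := by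
    rintro x ⟨hx0, hx1⟩
    have h1x : t - (d * x + r) = d * (1 - x) := by ring
    have hdx : d * x + r - r = d * x := by ring
    rw [h1x, hdx, ← ENNReal.ofReal_mul (rlKernel_nonneg_s1 hβ.le (by positivity)),
      ← ENNReal.ofReal_mul (abs_nonneg d), ← ENNReal.ofReal_mul (by positivity)]
    congr 1
    rw [rlKernel, rlKernel, abs_of_pos hd, Real.mul_rpow hd.le (by linarith),
      Real.mul_rpow hd.le hx0.le, show β + γ - 1 = (β - 1) + (γ - 1) + 1 by ring,
      Real.rpow_add hd, Real.rpow_add hd, Real.rpow_one]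
    field_simp
  rw [← himage, lintegral_image_eq_lintegral_abs_deriv_mul measurableSet_Ioo hderiv
      ((add_left_injective r).comp (mul_right_injective₀ hd.ne')).injOn,
    setLIntegral_congr_fun measurableSet_Ioo hintegrand,
    lintegral_const_mul' _ _ ENNReal.ofReal_ne_top, lintegral_rpow_mul_one_sub_rpow hβ hγ,
    ← ENNReal.ofReal_mul (by positivity)]
  congr 1
  rw [ProbabilityTheory.beta, rlKernel, add_comm γ β]
  field_simp

noncomputable def rlIntegral (β : ℝ) (f : ℝ → ℝ≥0∞) (t : ℝ) : ℝ≥0∞ :=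
  ∫⁻ s in Ioo 0 t, ENNReal.ofReal (rlKernel β (t - s)) * f s

lemma rlIntegral_rlIntegral {β γ : ℝ} (hβ : 0 < β) (hγ : 0 < γ) {f : ℝ → ℝ≥0∞}
    (hf : Measurable f) (t : ℝ) :
    rlIntegral β (rlIntegral γ f) t = rlIntegral (β + γ) f t := by
  let F : ℝ × ℝ → ℝ≥0∞ := fun p =>
    ENNReal.ofReal (rlKernel β (t - p.1)) * (ENNReal.ofReal (rlKernel γ (p.1 - p.2)) * f p.2)
  let G : ℝ → ℝ → ℝ≥0∞ := fun s r => {p : ℝ × ℝ | p.2 < p.1}.indicator F (s, r)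
  have hG : Measurable (Function.uncurry G) := by
    refine Measurable.indicator ?_ (measurableSet_lt measurable_snd measurable_fst)
    simp only [F, rlKernel]
    fun_prop
  calc rlIntegral β (rlIntegral γ f) t = ∫⁻ s in Ioo 0 t, ∫⁻ r in Ioo 0 t, G s r := by
        refine setLIntegral_congr_fun measurableSet_Ioo fun s hs => ?_
        have hG_s : G s = (Iio s).indicator fun r => F (s, r) := by
          ext r; simp [G, indicator_apply]
        rw [rlIntegral, ← lintegral_const_mul' _ _ ENNReal.ofReal_ne_top, hG_s,
          lintegral_indicator measurableSet_Iio, Measure.restrict_restrict measurableSet_Iio,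
          Iio_inter_Ioo, min_eq_left hs.2.le]
    _ = ∫⁻ r in Ioo 0 t, ∫⁻ s in Ioo 0 t, G s r := lintegral_lintegral_swap hG.aemeasurable
    _ = rlIntegral (β + γ) f t := by
        refine setLIntegral_congr_fun measurableSet_Ioo fun r hr => ?_
        have hG_r : (fun s => G s r) = (Ioi r).indicator fun s => F (s, r) := by
          ext s; simp [G, indicator_apply]
        simp_rw [hG_r, F, ← mul_assoc]
        rw [lintegral_indicator measurableSet_Ioi, Measure.restrict_restrict measurableSet_Ioi,
          Ioi_inter_Ioo, max_eq_left hr.1.le, lintegral_mul_const _ (by unfold rlKernel; fun_prop),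
          lintegral_rlKernel_mul_rlKernel hβ hγ hr.2]

lemma rlIntegral_const {β t : ℝ} (hβ : 0 < β) (ht : 0 < t) (a : ℝ≥0∞) :
    rlIntegral β (fun _ => a) t = a * ENNReal.ofReal (rlKernel (β + 1) t) := by
  rw [rlIntegral, lintegral_mul_const _ (by unfold rlKernel; fun_prop), mul_comm]
  congr 1
  simpa [rlKernel_one] using lintegral_rlKernel_mul_rlKernel hβ one_pos ht

lemma rlIntegral_const_add_mul {β t : ℝ} (hβ : 0 < β) (ht : 0 < t) (a : ℝ≥0∞) (c : ℝ≥0)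
    (f : ℝ → ℝ≥0∞) :
    rlIntegral β (fun s => a + c * f s) t =
      a * ENNReal.ofReal (rlKernel (β + 1) t) + c * rlIntegral β f t := by
  simp_rw [rlIntegral, mul_add]
  rw [lintegral_add_left (by unfold rlKernel; fun_prop), ← rlIntegral, rlIntegral_const hβ ht,
    ← lintegral_const_mul' _ _ ENNReal.coe_ne_top]
  simp_rw [mul_left_comm (c : ℝ≥0∞)]

lemma rlIntegral_mono_ae {β T t : ℝ} {f g : ℝ → ℝ≥0∞}
    (hfg : ∀ᵐ s ∂volume.restrict (Ioo 0 T), f s ≤ g s) (ht : t ≤ T) :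
    rlIntegral β f t ≤ rlIntegral β g t := by
  refine lintegral_mono_ae ?_
  filter_upwards [ae_restrict_of_ae_restrict_of_subset (Ioo_subset_Ioo_right ht) hfg]
    with s hs using mul_le_mul_right hs _

lemma rlIntegral_le_mul_lintegral {β T t : ℝ} (hβ : 1 ≤ β) (ht : t ≤ T) (f : ℝ → ℝ≥0∞) :
    rlIntegral β f t ≤ ENNReal.ofReal (rlKernel β T) * ∫⁻ s in Ioo 0 t, f s := by
  rw [← lintegral_const_mul' _ _ ENNReal.ofReal_ne_top]
  refine setLIntegral_mono' measurableSet_Ioo fun s hs => mul_le_mul_left ?_ _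
  exact ENNReal.ofReal_le_ofReal
    (rlKernel_le_rlKernel hβ (by linarith [hs.2]) (by linarith [hs.1]))

lemma ofReal_conv_le_rlIntegral {α t : ℝ} (hα : 0 ≤ α) (ht : 0 ≤ t) {w : ℝ → ℝ}
    (hw : Measurable w) (hw0 : 0 ≤ w) :
    ENNReal.ofReal (conv (rlKernel α) w t) ≤ rlIntegral α (fun s => ENNReal.ofReal (w s)) t := by
  have hk : ∀ s ∈ Ioc 0 t, 0 ≤ rlKernel α (t - s) := fun s hs =>
    rlKernel_nonneg_s1 hα (by linarith [hs.2])
  rw [conv, intervalIntegral.integral_of_le ht, integral_eq_lintegral_of_nonneg_ae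
      ((ae_restrict_mem measurableSet_Ioc).mono fun s hs => mul_nonneg (hk s hs) (hw0 s))
      (by unfold rlKernel; fun_prop),
    rlIntegral, Measure.restrict_congr_set Ioo_ae_eq_Ioc]
  refine ENNReal.ofReal_toReal_le.trans_eq
    (setLIntegral_congr_fun measurableSet_Ioc fun s hs => ?_)
  rw [ENNReal.ofReal_mul (hk s hs)]

lemma conv_congr_ae {k u w : ℝ → ℝ} {T t : ℝ} (huw : u =ᵐ[volume.restrict (Ioo 0 T)] w)
    (ht : t ∈ Ioo 0 T) : conv k u t = conv k w t := by
  refine intervalIntegral.integral_congr_ae_restrict ?_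
  rw [uIoc_of_le ht.1.le]
  filter_upwards [ae_restrict_of_ae_restrict_of_subset (Ioc_subset_Ioo_right ht.2) huw]
    with s hs
  rw [hs]

lemma conv_rlKernel_nonneg {α T t : ℝ} (hα : 0 ≤ α) {v : ℝ → ℝ}
    (hv : ∀ᵐ s ∂volume.restrict (Ioo 0 T), 0 ≤ v s) (ht : t ∈ Ioo 0 T) :
    0 ≤ conv (rlKernel α) v t := by
  refine intervalIntegral.integral_nonneg_of_ae_restrict ht.1.le ?_
  rw [← Measure.restrict_congr_set Ioo_ae_eq_Icc]
  filter_upwards [ae_restrict_of_ae_restrict_of_subset (Ioo_subset_Ioo_right ht.2.le) hv,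
    ae_restrict_mem measurableSet_Ioo] with s hs hmem
  exact mul_nonneg (rlKernel_nonneg_s1 hα (by linarith [hmem.2])) hs

lemma conv_rlKernel_le_of_ae_le {α T t B : ℝ} (hα : 0 < α) (hB : 0 ≤ B) {w : ℝ → ℝ}
    (hw : Measurable w) (hw0 : 0 ≤ w) (hwB : ∀ᵐ s ∂volume.restrict (Ioo 0 T), w s ≤ B)
    (ht : t ∈ Ioo 0 T) :
    conv (rlKernel α) w t ≤ B * rlKernel (α + 1) T := by
  have hK := rlKernel_le_rlKernel (β := α + 1) (by linarith) ht.1.le ht.2.le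
  have hK0 := (rlKernel_nonneg_s1 (by linarith) ht.1.le).trans hK
  rw [← ENNReal.ofReal_le_ofReal_iff (mul_nonneg hB hK0)]
  calc ENNReal.ofReal (conv (rlKernel α) w t)
      ≤ rlIntegral α (fun s => ENNReal.ofReal (w s)) t :=
        ofReal_conv_le_rlIntegral hα.le ht.1.le hw hw0
    _ ≤ rlIntegral α (fun _ => ENNReal.ofReal B) t :=
        rlIntegral_mono_ae (hwB.mono fun s hs => ENNReal.ofReal_le_ofReal hs) ht.2.le
    _ ≤ ENNReal.ofReal (B * rlKernel (α + 1) T) := by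
        rw [rlIntegral_const hα ht.1, ENNReal.ofReal_mul hB]
        gcongr

lemma exists_ae_le_add_mul_rlIntegral {T α : ℝ} (hα : 0 < α) (c : ℝ≥0) (n : ℕ) :
    ∃ A M : ℝ≥0, ∀ (a : ℝ≥0∞) (W : ℝ → ℝ≥0∞), Measurable W →
      (∀ᵐ t ∂volume.restrict (Ioo 0 T), W t ≤ a + c * rlIntegral α W t) →
      ∀ᵐ t ∂volume.restrict (Ioo 0 T), W t ≤ a * A + M * rlIntegral ((n + 1) * α) W t := by
  induction n with
  | zero => exact ⟨1, c, fun a W _ h => by simpa using h⟩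
  | succ n ih =>
    obtain ⟨A, M, hAM⟩ := ih
    set β : ℝ := (n + 1) * α
    have hβ : 0 < β := by positivity
    set K : ℝ≥0 := (rlKernel (β + 1) T).toNNReal
    refine ⟨A + M * K, M * c, fun a W hW h => ?_⟩
    filter_upwards [hAM a W hW h, ae_restrict_mem measurableSet_Ioo] with t hWt ht
    have hβα : (((n + 1 : ℕ) : ℝ) + 1) * α = β + α := by push_cast; ring
    have hstep : rlIntegral β W t ≤ a * K + c * rlIntegral (β + α) W t :=
      calc rlIntegral β W t ≤ rlIntegral β (fun s => a + c * rlIntegral α W s) t :=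
            rlIntegral_mono_ae h ht.2.le
        _ = a * ENNReal.ofReal (rlKernel (β + 1) t) + c * rlIntegral (β + α) W t := by
            rw [rlIntegral_const_add_mul hβ ht.1, rlIntegral_rlIntegral hβ hα hW]
        _ ≤ a * K + c * rlIntegral (β + α) W t := by
            gcongr
            exact ENNReal.ofReal_le_ofReal (rlKernel_le_rlKernel (by linarith) ht.1.le ht.2.le)
    calc W t ≤ a * A + M * rlIntegral β W t := hWt
      _ ≤ a * A + M * (a * K + c * rlIntegral (β + α) W t) := by gcongr
      _ = a * ↑(A + M * K) + ↑(M * c) * rlIntegral ((((n + 1 : ℕ) : ℝ) + 1) * α) W t := by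
          rw [hβα]; push_cast; ring

lemma le_mul_exp_of_le_add_mul_integral {ψ : ℝ → ℝ} (hψ : Continuous ψ) {a K T : ℝ}
    (hK : 0 ≤ K) (h : ∀ x ∈ Icc 0 T, ψ x ≤ a + K * ∫ s in 0..x, ψ s) :
    ∀ x ∈ Icc 0 T, ψ x ≤ a * Real.exp (K * x) := by
  set F := fun x => ∫ s in 0..x, ψ s
  have hF : ∀ x, HasDerivAt F (ψ x) x := fun x => (hψ.integral_hasStrictDerivAt 0 x).hasDerivAt
  have hF_le := le_gronwallBound_of_liminf_deriv_right_le
    (δ := 0) (K := K) (ε := a) (a := 0) (b := T)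
    (fun x _ => (hF x).continuousAt.continuousWithinAt)
    (fun x _ r hr => (hF x).hasDerivWithinAt.liminf_right_slope_le hr) (by simp [F])
    (fun x hx => by linarith [h x (Ico_subset_Icc_self hx)])
  intro x hx
  calc ψ x ≤ a + K * F x := h x hx
    _ ≤ a + K * gronwallBound 0 K a (x - 0) := by gcongr; exact hF_le x hx
    _ = a * Real.exp (K * x) := by
        rcases eq_or_ne K 0 with rfl | hK0
        · simp [gronwallBound_K0]
        · rw [gronwallBound_of_K_ne_0 hK0, sub_zero]
          field_simp
          ring

lemma ae_le_mul_of_le_add_mul_integral {w : ℝ → ℝ} (hw : Integrable w) {A M T : ℝ}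
    (hA : 0 ≤ A) (hM : 0 ≤ M)
    (h : ∀ᵐ t ∂volume.restrict (Ioo 0 T), w t ≤ A + M * ∫ s in 0..t, w s) :
    ∀ᵐ t ∂volume.restrict (Ioo 0 T), w t ≤ A * (1 + M * T * Real.exp (M * T)) := by
  set ψ := fun x => ∫ s in 0..x, w s
  have hψ : Continuous ψ :=
    intervalIntegral.continuous_primitive (fun _ _ => hw.intervalIntegrable) 0
  have hψ_le : ∀ x ∈ Icc 0 T, ψ x ≤ A * T + M * ∫ s in 0..x, ψ s := by
    intro x hx
    have hle : ∀ᵐ s ∂volume.restrict (Icc 0 x), w s ≤ A + M * ψ s := by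
      rw [← Measure.restrict_congr_set Ioo_ae_eq_Icc]
      exact ae_restrict_of_ae_restrict_of_subset (Ioo_subset_Ioo_right hx.2) h
    have hint : IntervalIntegrable (fun s => M * ψ s) volume 0 x :=
      (continuous_const.mul hψ).intervalIntegrable _ _
    calc ψ x ≤ ∫ s in 0..x, (A + M * ψ s) :=
          intervalIntegral.integral_mono_ae_restrict hx.1 hw.intervalIntegrable
            (intervalIntegrable_const.add hint) hle
      _ = A * x + M * ∫ s in 0..x, ψ s := by
          rw [intervalIntegral.integral_add intervalIntegrable_const hint,
            intervalIntegral.integral_const_mul]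
          simp [mul_comm]
      _ ≤ A * T + M * ∫ s in 0..x, ψ s := by gcongr; exact hx.2
  filter_upwards [h, ae_restrict_mem measurableSet_Ioo] with t ht hmem
  have hT : 0 ≤ T := by linarith [hmem.1, hmem.2]
  calc w t ≤ A + M * ψ t := ht
    _ ≤ A + M * (A * T * Real.exp (M * T)) := by
        gcongr
        refine (le_mul_exp_of_le_add_mul_integral hψ hM hψ_le t ⟨hmem.1.le, hmem.2.le⟩).trans ?_
        gcongr
        exact hmem.2.le
    _ = A * (1 + M * T * Real.exp (M * T)) := by ring

lemma lintegral_Ioo_ofReal_eq_ofReal_intervalIntegral {t : ℝ} (ht : 0 ≤ t) {w : ℝ → ℝ}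
    (hw : IntegrableOn w (Ioc 0 t)) (hw0 : 0 ≤ w) :
    ∫⁻ s in Ioo 0 t, ENNReal.ofReal (w s) = ENNReal.ofReal (∫ s in 0..t, w s) := by
  rw [intervalIntegral.integral_of_le ht, ofReal_integral_eq_lintegral_ofReal hw (ae_of_all _ hw0),
    Measure.restrict_congr_set Ioo_ae_eq_Ioc]

theorem ae_le_mul_of_le_add_mul_conv_rlKernel {T α b : ℝ} (hT : 0 ≤ T) (hα : 0 < α)
    (hb : 0 ≤ b) :
    ∃ C : ℝ, 0 ≤ C ∧ ∀ (a : ℝ) (w : ℝ → ℝ), 0 ≤ a → Measurable w → 0 ≤ w → Integrable w →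
      (∀ᵐ t ∂volume.restrict (Ioo 0 T), w t ≤ a + b * conv (rlKernel α) w t) →
      ∀ᵐ t ∂volume.restrict (Ioo 0 T), w t ≤ a * C := by
  obtain ⟨n, hn⟩ := exists_nat_ge α⁻¹
  set β : ℝ := (n + 1) * α
  have hβ : 1 ≤ β := by
    have := (inv_le_iff_one_le_mul₀ hα).1 hn
    nlinarith
  obtain ⟨A, M, hAM⟩ := exists_ae_le_add_mul_rlIntegral (T := T) hα b.toNNReal n
  set M' : ℝ := M * rlKernel β T with hM'_def
  have hM' : 0 ≤ M' := mul_nonneg M.coe_nonneg (rlKernel_nonneg_s1 (by linarith) hT)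
  refine ⟨A * (1 + M' * T * Real.exp (M' * T)), by positivity, fun a w ha hw hw0 hwi h => ?_⟩
  have hW : ∀ᵐ t ∂volume.restrict (Ioo 0 T), ENNReal.ofReal (w t) ≤
      ENNReal.ofReal a + b.toNNReal * rlIntegral α (fun s => ENNReal.ofReal (w s)) t := by
    filter_upwards [h, ae_restrict_mem measurableSet_Ioo] with t ht hmem
    calc ENNReal.ofReal (w t) ≤ ENNReal.ofReal (a + b * conv (rlKernel α) w t) :=
          ENNReal.ofReal_le_ofReal ht
      _ ≤ ENNReal.ofReal a + ENNReal.ofReal b * ENNReal.ofReal (conv (rlKernel α) w t) := by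
          rw [← ENNReal.ofReal_mul hb]
          exact ENNReal.ofReal_add_le
      _ ≤ _ := by
          gcongr ENNReal.ofReal a + _ * ?_
          exact ofReal_conv_le_rlIntegral hα.le hmem.1.le hw hw0
  have hreal : ∀ᵐ t ∂volume.restrict (Ioo 0 T), w t ≤ a * A + M' * ∫ s in 0..t, w s := by
    filter_upwards [hAM _ _ hw.ennreal_ofReal hW, ae_restrict_mem measurableSet_Ioo]
      with t ht hmem
    have hint_nonneg : 0 ≤ ∫ s in 0..t, w s :=
      intervalIntegral.integral_nonneg hmem.1.le fun s _ => hw0 s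
    rw [← ENNReal.ofReal_le_ofReal_iff (by positivity)]
    calc ENNReal.ofReal (w t)
        ≤ ENNReal.ofReal a * A + M * rlIntegral β (fun s => ENNReal.ofReal (w s)) t := ht
      _ ≤ ENNReal.ofReal a * A + M * (ENNReal.ofReal (rlKernel β T) *
            ∫⁻ s in Ioo 0 t, ENNReal.ofReal (w s)) := by
          gcongr; exact rlIntegral_le_mul_lintegral hβ hmem.2.le _
      _ = ENNReal.ofReal (a * A + M' * ∫ s in 0..t, w s) := by
          rw [lintegral_Ioo_ofReal_eq_ofReal_intervalIntegral hmem.1.le hwi.integrableOn hw0,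
            ENNReal.ofReal_add (by positivity) (by positivity), ENNReal.ofReal_mul ha,
            ENNReal.ofReal_mul hM', hM'_def, ENNReal.ofReal_mul M.coe_nonneg,
            ENNReal.ofReal_coe_nnreal, ENNReal.ofReal_coe_nnreal, mul_assoc]
  filter_upwards [ae_le_mul_of_le_add_mul_integral hwi (by positivity) hM' hreal] with t ht
  linarith

lemma exists_measurable_nonneg_integrable_ae_eq {X : Type*} [MeasurableSpace X] {μ : Measure X}
    {s : Set X} (hs : MeasurableSet s) {u : X → ℝ} (hu : IntegrableOn u s μ)
    (hu0 : ∀ᵐ x ∂μ.restrict s, 0 ≤ u x) :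
    ∃ w : X → ℝ, Measurable w ∧ 0 ≤ w ∧ Integrable w μ ∧ u =ᵐ[μ.restrict s] w := by
  set v := fun x => max (hu.1.mk u x) 0
  have huv : u =ᵐ[μ.restrict s] v := by
    filter_upwards [hu.1.ae_eq_mk, hu0] with x hx hx0
    simp [v, ← hx, hx0]
  refine ⟨s.indicator v, (hu.1.stronglyMeasurable_mk.measurable.max measurable_const).indicator hs,
    indicator_nonneg fun _ _ => le_max_right _ _,
    (integrable_indicator_iff hs).2 (hu.congr huv), ?_⟩
  filter_upwards [huv, ae_restrict_mem hs] with x hx hxs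
  rw [indicator_of_mem hxs, hx]

/-- Fractional Grönwall–Bellman inequality with an additional convolved term. -/
theorem fractional_gronwall_bellman_convolved
    (T α b : ℝ) (hT : 0 < T) (hα : α ∈ Set.Ioo (0:ℝ) 1) (hb : 0 < b) :
    ∃ C : ℝ, ∀ (a : ℝ) (u v : ℝ → ℝ), 0 < a →
      MeasureTheory.IntegrableOn u (Set.Ioo 0 T) →
      MeasureTheory.IntegrableOn v (Set.Ioo 0 T) →
      (∀ᵐ t ∂(MeasureTheory.volume.restrict (Set.Ioo 0 T)), 0 ≤ u t) →
      (∀ᵐ t ∂(MeasureTheory.volume.restrict (Set.Ioo 0 T)), 0 ≤ v t) →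
      (∀ᵐ t ∂(MeasureTheory.volume.restrict (Set.Ioo 0 T)),
        u t + conv (rlKernel α) v t ≤ a + b * conv (rlKernel α) u t) →
      (∀ᵐ t ∂(MeasureTheory.volume.restrict (Set.Ioo 0 T)),
        u t + conv (rlKernel α) v t ≤ a * C) := by
  obtain ⟨C, hC0, hC⟩ := ae_le_mul_of_le_add_mul_conv_rlKernel hT.le hα.1 hb.le
  refine ⟨1 + b * (C * rlKernel (α + 1) T), fun a u v ha hu _ hu0 hv0 h => ?_⟩
  obtain ⟨w, hw, hw0, hwi, huw⟩ :=
    exists_measurable_nonneg_integrable_ae_eq measurableSet_Ioo hu hu0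
  have hwC := hC a w ha.le hw hw0 hwi <| by
    filter_upwards [h, huw, ae_restrict_mem measurableSet_Ioo] with t ht hut hmem
    rw [← hut, ← conv_congr_ae huw hmem]
    linarith [conv_rlKernel_nonneg hα.1.le hv0 hmem]
  filter_upwards [h, ae_restrict_mem measurableSet_Ioo] with t ht hmem
  calc u t + conv (rlKernel α) v t ≤ a + b * conv (rlKernel α) w t := by
        rwa [← conv_congr_ae huw hmem]
    _ ≤ a + b * (a * C * rlKernel (α + 1) T) := by
        gcongr
        exact conv_rlKernel_le_of_ae_le hα.1 (by positivity) hw hw0 hwC hmem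
    _ = a * (1 + b * (C * rlKernel (α + 1) T)) := by ring
end

section
/- Quantitative entropy bound for degenerate mobilities: Let δ ∈ (0,1), L ≥ 0, and let m : [−1,1] → ℝ be Lipschitz with constant L, with m(x) > 0 for x ∈ (−1,1) and m(−1) = m(1) = 0. Define m_δ : ℝ → ℝ by m_δ(x) = m(δ−1) for x ≤ δ−1, m_δ(x) = m(x) for |x| ≤ 1−δ, and m_δ(x) = m(1−δ) for x ≥ 1−δ, and let Φ_δ(x) = ∫₀ˣ ∫₀ʸ (1/m_δ(z)) dz dy. Then for every x ∈ ℝ, (max(|x| − 1, 0))² ≤ 2 δ L Φ_δ(x); consequently, for any measure space (Ω, μ) and any measurable function φ : Ω → ℝ, ∫_Ω (max(|φ| − 1, 0))² dμ ≤ 2 δ L ∫_Ω Φ_δ(φ) dμ. -/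
open MeasureTheory Set

/-- The entropy function `Φ(x) = ∫₀ˣ ∫₀ʸ (1/m(z)) dz dy` associated with a mobility `m`. -/
noncomputable def entropy (m : ℝ → ℝ) (x : ℝ) : ℝ :=
  ∫ y in (0:ℝ)..x, ∫ z in (0:ℝ)..y, 1 / m z

/-- The truncated mobility `m_δ`: it equals `m(δ-1)` for `x ≤ δ-1`, `m(x)` for
`|x| ≤ 1-δ`, and `m(1-δ)` for `x ≥ 1-δ`; realized by clamping the argument. -/
noncomputable def truncMob (m : ℝ → ℝ) (δ : ℝ) : ℝ → ℝ :=
  fun x => m (max (δ - 1) (min (1 - δ) x))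

private lemma ent_nonneg_aux (g : ℝ → ℝ) (hg : Continuous g) (hg0 : ∀ z, 0 ≤ g z) (x : ℝ) :
    0 ≤ ∫ y in (0:ℝ)..x, ∫ z in (0:ℝ)..y, g z := by
  rcases le_total 0 x with hx | hx
  · exact intervalIntegral.integral_nonneg hx fun y hy =>
      intervalIntegral.integral_nonneg hy.1 fun z _ => hg0 z
  · rw [intervalIntegral.integral_symm]
    have h : ∀ y ∈ Icc x 0, (∫ z in (0:ℝ)..y, g z) ≤ 0 := by
      intro y hy
      rw [intervalIntegral.integral_symm]
      have : 0 ≤ ∫ z in y..(0:ℝ), g z :=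
        intervalIntegral.integral_nonneg hy.2 fun z _ => hg0 z
      linarith
    have : (∫ y in x..(0:ℝ), ∫ z in (0:ℝ)..y, g z) ≤ 0 := by
      calc (∫ y in x..(0:ℝ), ∫ z in (0:ℝ)..y, g z) ≤ ∫ y in x..(0:ℝ), (0:ℝ) := by
            apply intervalIntegral.integral_mono_on hx _ intervalIntegrable_const h
            exact (intervalIntegral.continuous_primitive
              (fun a b => hg.intervalIntegrable a b) 0).intervalIntegrable x 0
        _ = 0 := by simp
    linarith

private lemma ent_lower_aux (g : ℝ → ℝ) (hg : Continuous g) (hg0 : ∀ z, 0 ≤ g z)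
    (c : ℝ) (hc : 0 ≤ c) (hb : ∀ z, 1 ≤ z → c ≤ g z) (x : ℝ) (hx : 1 ≤ x) :
    c * (x - 1) ^ 2 / 2 ≤ ∫ y in (0:ℝ)..x, ∫ z in (0:ℝ)..y, g z := by
  set F : ℝ → ℝ := fun y => ∫ z in (0:ℝ)..y, g z with hFdef
  have hFc : Continuous F :=
    intervalIntegral.continuous_primitive (fun a b => hg.intervalIntegrable a b) 0
  have hFlow : ∀ y, 1 ≤ y → c * (y - 1) ≤ F y := by
    intro y hy
    have h1 : F y = (∫ z in (0:ℝ)..1, g z) + ∫ z in (1:ℝ)..y, g z :=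
      (intervalIntegral.integral_add_adjacent_intervals (hg.intervalIntegrable 0 1)
        (hg.intervalIntegrable 1 y)).symm
    have h2 : c * (y - 1) ≤ ∫ z in (1:ℝ)..y, g z := by
      have : (∫ z in (1:ℝ)..y, c) ≤ ∫ z in (1:ℝ)..y, g z :=
        intervalIntegral.integral_mono_on hy intervalIntegrable_const
          (hg.intervalIntegrable 1 y) (fun z hz => hb z hz.1)
      rw [intervalIntegral.integral_const, smul_eq_mul] at this
      linarith [this]
    have h3 : 0 ≤ ∫ z in (0:ℝ)..1, g z :=
      intervalIntegral.integral_nonneg zero_le_one fun z _ => hg0 z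
    linarith
  have hsplit : (∫ y in (0:ℝ)..x, F y) = (∫ y in (0:ℝ)..1, F y) + ∫ y in (1:ℝ)..x, F y :=
    (intervalIntegral.integral_add_adjacent_intervals (hFc.intervalIntegrable 0 1)
      (hFc.intervalIntegrable 1 x)).symm
  have h01 : 0 ≤ ∫ y in (0:ℝ)..1, F y :=
    intervalIntegral.integral_nonneg zero_le_one fun y hy =>
      intervalIntegral.integral_nonneg hy.1 fun z _ => hg0 z
  have h1x : (∫ y in (1:ℝ)..x, c * (y - 1)) ≤ ∫ y in (1:ℝ)..x, F y :=
    intervalIntegral.integral_mono_on hx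
      ((continuous_const.mul (continuous_id.sub continuous_const)).intervalIntegrable 1 x)
      (hFc.intervalIntegrable 1 x) (fun y hy => hFlow y hy.1)
  have hcomp : (∫ y in (1:ℝ)..x, c * (y - 1)) = c * (x - 1) ^ 2 / 2 := by
    rw [intervalIntegral.integral_const_mul,
      intervalIntegral.integral_comp_sub_right (fun u => u) 1]
    rw [integral_id]
    ring
  calc c * (x - 1) ^ 2 / 2 = ∫ y in (1:ℝ)..x, c * (y - 1) := hcomp.symm
    _ ≤ ∫ y in (1:ℝ)..x, F y := h1x
    _ ≤ (∫ y in (0:ℝ)..1, F y) + ∫ y in (1:ℝ)..x, F y := by linarith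
    _ = ∫ y in (0:ℝ)..x, F y := hsplit.symm

private lemma ent_reflect (g : ℝ → ℝ) (x : ℝ) :
    (∫ y in (0:ℝ)..x, ∫ z in (0:ℝ)..y, g z)
      = ∫ y in (0:ℝ)..(-x), ∫ z in (0:ℝ)..y, g (-z) := by
  have h1 : ∀ y : ℝ, (∫ z in (0:ℝ)..y, g (-z)) = -∫ z in (0:ℝ)..(-y), g z := by
    intro y
    rw [intervalIntegral.integral_comp_neg, neg_zero, intervalIntegral.integral_symm]
  have h2 : (∫ y in (0:ℝ)..(-x), ∫ z in (0:ℝ)..(-y), g z)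
      = ∫ y in x..(0:ℝ), ∫ z in (0:ℝ)..y, g z := by
    have := intervalIntegral.integral_comp_neg (a := (0:ℝ)) (b := -x)
      (f := fun t => ∫ z in (0:ℝ)..t, g z)
    simpa using this
  symm
  calc (∫ y in (0:ℝ)..(-x), ∫ z in (0:ℝ)..y, g (-z))
      = ∫ y in (0:ℝ)..(-x), -∫ z in (0:ℝ)..(-y), g z := by simp only [h1]
    _ = -∫ y in (0:ℝ)..(-x), ∫ z in (0:ℝ)..(-y), g z := intervalIntegral.integral_neg
    _ = -∫ y in x..(0:ℝ), ∫ z in (0:ℝ)..y, g z := by rw [h2]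
    _ = ∫ y in (0:ℝ)..x, ∫ z in (0:ℝ)..y, g z := by
        rw [intervalIntegral.integral_symm, neg_neg]

/-- Quantitative entropy bound for degenerate mobilities: if `m` is `L`-Lipschitz on
`[-1,1]`, positive on `(-1,1)` and degenerate at `±1`, then
`(max(|x|-1,0))² ≤ 2 δ L Φ_δ(x)` for all `x`, and consequently the corresponding
integral inequality holds on any measure space. -/
theorem quantitative_entropy_bound
    (δ L : ℝ) (hδ : δ ∈ Set.Ioo (0:ℝ) 1) (hL : 0 ≤ L)
    (m : ℝ → ℝ)
    (hLip : ∀ x ∈ Set.Icc (-1:ℝ) 1, ∀ y ∈ Set.Icc (-1:ℝ) 1, |m x - m y| ≤ L * |x - y|)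
    (hpos : ∀ x ∈ Set.Ioo (-1:ℝ) 1, 0 < m x)
    (hm_neg : m (-1) = 0) (hm_pos : m 1 = 0) :
    (∀ x : ℝ, (max (|x| - 1) 0) ^ 2 ≤ 2 * δ * L * entropy (truncMob m δ) x) ∧
    (∀ (Ω : Type) (_ : MeasurableSpace Ω) (μ : MeasureTheory.Measure Ω) (φ : Ω → ℝ),
      Measurable φ →
      (∫⁻ ω, ENNReal.ofReal ((max (|φ ω| - 1) 0) ^ 2) ∂μ)
        ≤ ENNReal.ofReal (2 * δ * L)
            * ∫⁻ ω, ENNReal.ofReal (entropy (truncMob m δ) (φ ω)) ∂μ) := by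
  obtain ⟨hδ0, hδ1⟩ := hδ
  -- basic facts about the clamp
  have hclamp_mem : ∀ x : ℝ, max (δ - 1) (min (1 - δ) x) ∈ Icc (δ - 1) (1 - δ) := by
    intro x
    constructor
    · exact le_max_left _ _
    · exact max_le (by linarith) (min_le_left _ _)
  have hsub : Icc (δ - 1) (1 - δ) ⊆ Ioo (-1 : ℝ) 1 := fun y hy =>
    ⟨by linarith [hy.1], by linarith [hy.2]⟩
  have hMpos : ∀ x, 0 < truncMob m δ x := fun x => hpos _ (hsub (hclamp_mem x))
  -- continuity
  have hmc : ContinuousOn m (Icc (-1 : ℝ) 1) := by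
    have : LipschitzOnWith (Real.toNNReal L) m (Icc (-1 : ℝ) 1) := by
      apply LipschitzOnWith.of_dist_le_mul
      intro x hx y hy
      rw [Real.dist_eq, Real.dist_eq]
      calc |m x - m y| ≤ L * |x - y| := hLip x hx y hy
        _ = (Real.toNNReal L : ℝ) * |x - y| := by rw [Real.coe_toNNReal L hL]
    exact this.continuousOn
  have hclampc : Continuous fun x : ℝ => max (δ - 1) (min (1 - δ) x) :=
    continuous_const.max (continuous_const.min continuous_id)
  have hMc : Continuous (truncMob m δ) := by
    apply hmc.comp_continuous hclampc
    intro x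
    exact Ioo_subset_Icc_self (hsub (hclamp_mem x))
  set g : ℝ → ℝ := fun z => 1 / truncMob m δ z with hgdef
  have hgc : Continuous g := continuous_const.div hMc fun z => (hMpos z).ne'
  have hg0 : ∀ z, 0 ≤ g z := fun z => le_of_lt (one_div_pos.mpr (hMpos z))
  have hent_eq : ∀ x, entropy (truncMob m δ) x = ∫ y in (0:ℝ)..x, ∫ z in (0:ℝ)..y, g z :=
    fun x => rfl
  -- L is positive
  have hL0 : 0 < L := by
    have h0 : 0 < m 0 := hpos 0 (by norm_num)
    have h1 := hLip 0 (by norm_num) 1 (by norm_num)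
    rw [hm_pos] at h1
    simp only [sub_zero, zero_sub, abs_neg, abs_one, mul_one] at h1
    calc (0:ℝ) < m 0 := h0
      _ ≤ |m 0| := le_abs_self _
      _ ≤ L := h1
  set c : ℝ := 1 / (L * δ) with hcdef
  have hLδ : 0 < L * δ := mul_pos hL0 hδ0
  have hc : 0 ≤ c := le_of_lt (by positivity)
  -- bounds near the degenerate endpoints
  have hmr : m (1 - δ) ≤ L * δ := by
    have := hLip (1 - δ) ⟨by linarith, by linarith⟩ 1 ⟨by norm_num, le_refl _⟩
    rw [hm_pos, sub_zero] at this
    have habs : |(1 - δ) - 1| = δ := by rw [show (1 - δ) - 1 = -δ by ring, abs_neg, abs_of_pos hδ0]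
    rw [habs] at this
    exact le_trans (le_abs_self _) this
  have hml : m (δ - 1) ≤ L * δ := by
    have := hLip (δ - 1) ⟨by linarith, by linarith⟩ (-1) ⟨le_refl _, by norm_num⟩
    rw [hm_neg, sub_zero] at this
    have habs : |(δ - 1) - (-1)| = δ := by
      rw [show (δ - 1) - (-1) = δ by ring, abs_of_pos hδ0]
    rw [habs] at this
    exact le_trans (le_abs_self _) this
  have hbr : ∀ z, 1 ≤ z → c ≤ g z := by
    intro z hz
    have hzt : max (δ - 1) (min (1 - δ) z) = 1 - δ := by
      rw [min_eq_left (by linarith), max_eq_right (by linarith)]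
    have hmz : truncMob m δ z = m (1 - δ) := by rw [truncMob, hzt]
    have hpz : 0 < m (1 - δ) := by rw [← hmz]; exact hMpos z
    rw [hgdef]
    simp only [hmz]
    exact one_div_le_one_div_of_le hpz hmr
  have hbl : ∀ z, 1 ≤ z → c ≤ g (-z) := by
    intro z hz
    have hzt : max (δ - 1) (min (1 - δ) (-z)) = δ - 1 := by
      rw [min_eq_right (by linarith), max_eq_left (by linarith)]
    have hmz : truncMob m δ (-z) = m (δ - 1) := by rw [truncMob, hzt]
    have hpz : 0 < m (δ - 1) := by rw [← hmz]; exact hMpos (-z)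
    rw [hgdef]
    simp only [hmz]
    exact one_div_le_one_div_of_le hpz hml
  -- pointwise bound
  have key : ∀ x : ℝ, (max (|x| - 1) 0) ^ 2 ≤ 2 * δ * L * entropy (truncMob m δ) x := by
    intro x
    have hent0 : 0 ≤ entropy (truncMob m δ) x := by
      rw [hent_eq]; exact ent_nonneg_aux g hgc hg0 x
    rcases le_or_gt (|x|) 1 with hx1 | hx1
    · rw [max_eq_right (by linarith)]
      have : (0:ℝ) ≤ 2 * δ * L * entropy (truncMob m δ) x :=
        mul_nonneg (by positivity) hent0
      simpa using this
    · rw [max_eq_left (by linarith)]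
      have hkey : c * (|x| - 1) ^ 2 / 2 ≤ entropy (truncMob m δ) x := by
        rcases le_or_gt 0 x with hx0 | hx0
        · have hxabs : |x| = x := abs_of_nonneg hx0
          rw [hxabs] at hx1 ⊢
          rw [hent_eq]
          exact ent_lower_aux g hgc hg0 c hc hbr x hx1.le
        · have hxabs : |x| = -x := abs_of_neg hx0
          rw [hxabs] at hx1 ⊢
          rw [hent_eq, ent_reflect g x]
          exact ent_lower_aux (fun z => g (-z)) (hgc.comp continuous_neg)
            (fun z => hg0 (-z)) c hc hbl (-x) hx1.le
      have harith : 2 * δ * L * (c * (|x| - 1) ^ 2 / 2) = (|x| - 1) ^ 2 := by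
        rw [hcdef]
        field_simp
      calc (|x| - 1) ^ 2 = 2 * δ * L * (c * (|x| - 1) ^ 2 / 2) := harith.symm
        _ ≤ 2 * δ * L * entropy (truncMob m δ) x := by
            apply mul_le_mul_of_nonneg_left hkey (by positivity)
  refine ⟨key, ?_⟩
  intro Ω _ μ φ _
  calc (∫⁻ ω, ENNReal.ofReal ((max (|φ ω| - 1) 0) ^ 2) ∂μ)
      ≤ ∫⁻ ω, ENNReal.ofReal (2 * δ * L * entropy (truncMob m δ) (φ ω)) ∂μ :=
        lintegral_mono fun ω => ENNReal.ofReal_le_ofReal (key (φ ω))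
    _ = ∫⁻ ω, ENNReal.ofReal (2 * δ * L) * ENNReal.ofReal (entropy (truncMob m δ) (φ ω)) ∂μ := by
        congr 1
        funext ω
        rw [ENNReal.ofReal_mul (by positivity)]
    _ = ENNReal.ofReal (2 * δ * L) * ∫⁻ ω, ENNReal.ofReal (entropy (truncMob m δ) (φ ω)) ∂μ :=
        lintegral_const_mul' _ _ ENNReal.ofReal_ne_top
end

section
/- Resolvent kernel identity for the Yosida-type approximation: Let α ∈ (0,1), k > 0 and T > 0. Suppose s ∈ L¹(0,T) satisfies the Volterra equation s(t) + k (g_α * s)(t) = 1 for almost every t ∈ (0,T), and h ∈ L¹(0,T) satisfies h(t) + k (h * g_α)(t) = k g_α(t) for almost every t ∈ (0,T). Then k s(t) = (g_{1−α} * h)(t) for almost every t ∈ (0,T). -/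
open MeasureTheory Set

open Convolution ContinuousLinearMap Filter

lemma conv_comm' (F G : ℝ → ℝ) (x : ℝ) : (F ⋆[mul ℝ ℝ] G) x = (G ⋆[mul ℝ ℝ] F) x := by
  simp only [convolution_def, mul_apply']
  rw [← MeasureTheory.integral_sub_left_eq_self (fun σ => F σ * G (x - σ)) volume x]
  simp only [sub_sub_cancel]
  exact integral_congr_ae (Eventually.of_forall fun σ => mul_comm _ _)

lemma conv_eq_conv (f g : ℝ → ℝ) {T t : ℝ} (ht : t ∈ Ioo 0 T) :
    conv f g t = ((Ioo (0:ℝ) T).indicator f ⋆[mul ℝ ℝ] (Ioo (0:ℝ) T).indicator g) t := by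
  have h1 : conv f g t = ∫ σ in (0:ℝ)..t, f σ * g (t - σ) := by
    have := intervalIntegral.integral_comp_sub_left (a := 0) (b := t)
      (fun σ => f σ * g (t - σ)) t
    simp only [sub_sub_cancel, sub_self, sub_zero] at this
    rw [conv, ← this]
  rw [h1, convolution_def]
  simp only [mul_apply']
  have h2 : ∀ σ : ℝ, (Ioo (0:ℝ) T).indicator f σ * (Ioo (0:ℝ) T).indicator g (t - σ)
      = (Ioo (0:ℝ) t).indicator (fun σ => f σ * g (t - σ)) σ := by
    intro σ
    by_cases hσ : σ ∈ Ioo (0:ℝ) t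
    · rw [indicator_of_mem hσ,
        indicator_of_mem (show σ ∈ Ioo (0:ℝ) T from ⟨hσ.1, hσ.2.trans ht.2⟩),
        indicator_of_mem (show t - σ ∈ Ioo (0:ℝ) T from
          ⟨sub_pos.2 hσ.2, by have := hσ.1; have := ht.2; linarith⟩)]
    · rw [indicator_of_notMem hσ]
      rcases le_or_gt σ 0 with h | h
      · rw [indicator_of_notMem (show σ ∉ Ioo (0:ℝ) T from fun hm => absurd hm.1 (not_lt.2 h)),
          zero_mul]
      · have : ¬ t - σ ∈ Ioo (0:ℝ) T := by
          intro hm; exact hσ ⟨h, by have := hm.1; linarith⟩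
        rw [indicator_of_notMem this, mul_zero]
  simp_rw [h2]
  rw [MeasureTheory.integral_indicator measurableSet_Ioo,
    intervalIntegral.integral_of_le ht.1.le, MeasureTheory.integral_Ioc_eq_integral_Ioo]

lemma conv_zero_of_nonpos {F G : ℝ → ℝ} (hF : ∀ u ≤ (0:ℝ), F u = 0)
    (hG : ∀ u ≤ (0:ℝ), G u = 0) {x : ℝ} (hx : x ≤ 0) : (F ⋆[mul ℝ ℝ] G) x = 0 := by
  simp only [convolution_def, mul_apply']
  rw [show (0:ℝ) = ∫ (_ : ℝ), (0:ℝ) by simp]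
  refine integral_congr_ae (Eventually.of_forall fun σ => ?_)
  dsimp only
  rcases le_or_gt σ 0 with h | h
  · rw [hF σ h, zero_mul]
  · rw [hG (x - σ) (by linarith), mul_zero]


lemma beta_real {α : ℝ} (hα : α ∈ Ioo (0:ℝ) 1) {t : ℝ} (ht : 0 < t) :
    ∫ σ in (0:ℝ)..t, σ ^ (α - 1) * (t - σ) ^ ((1 - α) - 1)
      = Real.Gamma α * Real.Gamma (1 - α) := by
  have h1α : (0:ℝ) < 1 - α := by linarith [hα.2]
  have key := Complex.betaIntegral_scaled (α : ℂ) ((1 - α : ℝ) : ℂ) ht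
  have hre : Complex.Gamma (α : ℂ) * Complex.Gamma ((1-α:ℝ) : ℂ)
      = Complex.Gamma ((α : ℂ) + ((1-α:ℝ):ℂ)) * Complex.betaIntegral (α:ℂ) ((1-α:ℝ):ℂ) :=
    Complex.Gamma_mul_Gamma_eq_betaIntegral (by simpa using hα.1) (by simpa using h1α)
  have hsum : (α : ℂ) + ((1-α:ℝ):ℂ) = 1 := by push_cast; ring
  rw [hsum, Complex.Gamma_one, one_mul] at hre
  have hexp : (α : ℂ) + ((1-α:ℝ):ℂ) - 1 = 0 := by rw [hsum]; ring
  rw [hexp, Complex.cpow_zero, one_mul] at key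
  -- relate real and complex integrals
  have hcast : ((∫ σ in (0:ℝ)..t, σ ^ (α - 1) * (t - σ) ^ ((1 - α) - 1) : ℝ) : ℂ)
      = ∫ σ in (0:ℝ)..t, (σ : ℂ) ^ ((α:ℂ) - 1) * (((t:ℂ)) - σ) ^ (((1-α:ℝ):ℂ) - 1) := by
    rw [← intervalIntegral.integral_ofReal]
    refine intervalIntegral.integral_congr fun σ hσ => ?_
    rw [uIcc_of_le ht.le] at hσ
    rw [Complex.ofReal_mul, Complex.ofReal_cpow hσ.1 (α - 1),
      Complex.ofReal_cpow (by linarith [hσ.2] : (0:ℝ) ≤ t - σ) (1 - α - 1)]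
    push_cast
    ring
  have : ((∫ σ in (0:ℝ)..t, σ ^ (α - 1) * (t - σ) ^ ((1 - α) - 1) : ℝ) : ℂ)
      = ((Real.Gamma α * Real.Gamma (1 - α) : ℝ) : ℂ) := by
    rw [hcast, key, ← hre]
    rw [Complex.Gamma_ofReal, Complex.Gamma_ofReal]
    push_cast; ring
  exact_mod_cast this

lemma conv_rl {α : ℝ} (hα : α ∈ Ioo (0:ℝ) 1) {t : ℝ} (ht : 0 < t) :
    conv (rlKernel (1 - α)) (rlKernel α) t = 1 := by
  have hΓα : 0 < Real.Gamma α := Real.Gamma_pos_of_pos hα.1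
  have hΓ1α : 0 < Real.Gamma (1 - α) := Real.Gamma_pos_of_pos (by linarith [hα.2])
  have h1 : conv (rlKernel (1 - α)) (rlKernel α) t
      = (Real.Gamma (1-α))⁻¹ * (Real.Gamma α)⁻¹
        * ∫ σ in (0:ℝ)..t, σ ^ (α - 1) * (t - σ) ^ ((1 - α) - 1) := by
    rw [conv, ← intervalIntegral.integral_const_mul]
    refine intervalIntegral.integral_congr fun σ _ => ?_
    simp only [rlKernel]
    field_simp
  rw [h1, beta_real hα ht]
  field_simp

lemma rl_integrable {α : ℝ} (hα : 0 < α) {T : ℝ} (hT : 0 < T) :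
    IntegrableOn (rlKernel α) (Ioo (0:ℝ) T) volume := by
  have h1 : IntervalIntegrable (fun x : ℝ => x ^ (α - 1)) volume 0 T :=
    intervalIntegral.intervalIntegrable_rpow' (by linarith)
  have h2 : IntegrableOn (fun x : ℝ => x ^ (α - 1)) (Ioo (0:ℝ) T) volume :=
    ((intervalIntegrable_iff_integrableOn_Ioc_of_le hT.le).mp h1).mono_set Ioo_subset_Ioc_self
  exact h2.div_const _


/-- Resolvent kernel identity for the Yosida-type approximation: if `s` solves
`s + k (g_α * s) = 1` and `h` solves `h + k (h * g_α) = k g_α` a.e. on `(0,T)`, then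
`k s = g_{1-α} * h` a.e. on `(0,T)`. -/
theorem resolvent_kernel_identity
    (α k T : ℝ) (hα : α ∈ Set.Ioo (0:ℝ) 1) (hk : 0 < k) (hT : 0 < T)
    (s h : ℝ → ℝ)
    (hs : MeasureTheory.IntegrableOn s (Set.Ioo (0:ℝ) T))
    (hh : MeasureTheory.IntegrableOn h (Set.Ioo (0:ℝ) T))
    (hVs : ∀ᵐ t ∂(MeasureTheory.volume.restrict (Set.Ioo (0:ℝ) T)),
      s t + k * conv (rlKernel α) s t = 1)
    (hVh : ∀ᵐ t ∂(MeasureTheory.volume.restrict (Set.Ioo (0:ℝ) T)),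
      h t + k * conv h (rlKernel α) t = k * rlKernel α t) :
    ∀ᵐ t ∂(MeasureTheory.volume.restrict (Set.Ioo (0:ℝ) T)),
      k * s t = conv (rlKernel (1 - α)) h t := by
  obtain ⟨hα0, hα1⟩ := hα
  have hI : MeasurableSet (Ioo (0:ℝ) T) := measurableSet_Ioo
  set S : ℝ → ℝ := (Ioo (0:ℝ) T).indicator s with hS
  set H : ℝ → ℝ := (Ioo (0:ℝ) T).indicator h with hH
  set A : ℝ → ℝ := (Ioo (0:ℝ) T).indicator (rlKernel α) with hA
  set B : ℝ → ℝ := (Ioo (0:ℝ) T).indicator (rlKernel (1 - α)) with hB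
  -- integrability
  have iS : Integrable S volume := hs.integrable_indicator hI
  have iH : Integrable H volume := hh.integrable_indicator hI
  have iA : Integrable A volume := (rl_integrable hα0 hT).integrable_indicator hI
  have iB : Integrable B volume := (rl_integrable (by linarith) hT).integrable_indicator hI
  have iHA : Integrable (H ⋆[mul ℝ ℝ] A) volume := iH.integrable_convolution (mul ℝ ℝ) iA
  have iAS : Integrable (A ⋆[mul ℝ ℝ] S) volume := iA.integrable_convolution (mul ℝ ℝ) iS
  -- vanishing on nonpositives
  have vInd : ∀ (f : ℝ → ℝ) (u : ℝ), u ≤ 0 → (Ioo (0:ℝ) T).indicator f u = 0 := by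
    intro f u hu
    exact indicator_of_notMem (fun hm => absurd hm.1 (not_lt.2 hu)) _
  have vS : ∀ u ≤ (0:ℝ), S u = 0 := fun u hu => vInd s u hu
  have vH : ∀ u ≤ (0:ℝ), H u = 0 := fun u hu => vInd h u hu
  have vA : ∀ u ≤ (0:ℝ), A u = 0 := fun u hu => vInd _ u hu
  have vB : ∀ u ≤ (0:ℝ), B u = 0 := fun u hu => vInd _ u hu
  have vHA : ∀ u ≤ (0:ℝ), (H ⋆[mul ℝ ℝ] A) u = 0 := fun u hu => conv_zero_of_nonpos vH vA hu
  have vAS : ∀ u ≤ (0:ℝ), (A ⋆[mul ℝ ℝ] S) u = 0 := fun u hu => conv_zero_of_nonpos vA vS hu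
  have vBA : ∀ u ≤ (0:ℝ), (B ⋆[mul ℝ ℝ] A) u = 0 := fun u hu => conv_zero_of_nonpos vB vA hu
  -- kernel identity
  have kerBA : ∀ x ∈ Ioo (0:ℝ) T, (B ⋆[mul ℝ ℝ] A) x = 1 := by
    intro x hx
    rw [← conv_eq_conv _ _ hx]
    exact conv_rl ⟨hα0, hα1⟩ hx.1
  -- hypotheses rephrased
  have hZ : ∀ᵐ τ ∂volume, τ < T → H τ + k * (H ⋆[mul ℝ ℝ] A) τ = k * A τ := by
    filter_upwards [(ae_restrict_iff' hI).mp hVh] with τ hτ hτT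
    rcases le_or_gt τ 0 with h0 | h0
    · rw [vH τ h0, vHA τ h0, vA τ h0]; ring
    · have hmem : τ ∈ Ioo (0:ℝ) T := ⟨h0, hτT⟩
      have h1 := hτ hmem
      rw [conv_eq_conv h (rlKernel α) hmem] at h1
      rw [hH, hA, indicator_of_mem hmem, indicator_of_mem hmem]
      exact h1
  have hYs : ∀ᵐ τ ∂volume, τ ∈ Ioo (0:ℝ) T → S τ + k * (A ⋆[mul ℝ ℝ] S) τ = 1 := by
    filter_upwards [(ae_restrict_iff' hI).mp hVs] with τ hτ hmem
    have h1 := hτ hmem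
    rw [conv_eq_conv (rlKernel α) s hmem] at h1
    rw [hS, indicator_of_mem hmem]
    exact h1
  -- a.e. existence
  have exBH := iB.ae_convolution_exists (mul ℝ ℝ) iH
  have exBHA := iB.ae_convolution_exists (mul ℝ ℝ) iHA
  have exHS := iH.ae_convolution_exists (mul ℝ ℝ) iS
  have exHAS := iH.ae_convolution_exists (mul ℝ ℝ) iAS
  have exHA_S := iHA.ae_convolution_exists (mul ℝ ℝ) iS
  -- associativity a.e.
  have assoc1 : ∀ᵐ x ∂volume,
      ((B ⋆[mul ℝ ℝ] A) ⋆[mul ℝ ℝ] H) x = (B ⋆[mul ℝ ℝ] (A ⋆[mul ℝ ℝ] H)) x := by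
    filter_upwards [iB.norm.ae_convolution_exists (mul ℝ ℝ)
      (iA.norm.integrable_convolution (mul ℝ ℝ) iH.norm)] with x hx
    exact convolution_assoc (mul ℝ ℝ) (mul ℝ ℝ) (mul ℝ ℝ) (mul ℝ ℝ)
      (fun a b c => mul_assoc a b c) iB.aestronglyMeasurable iA.aestronglyMeasurable
      iH.aestronglyMeasurable (iB.ae_convolution_exists (mul ℝ ℝ) iA)
      (iA.norm.ae_convolution_exists (mul ℝ ℝ) iH.norm) hx
  have assoc2 : ∀ᵐ x ∂volume,
      ((H ⋆[mul ℝ ℝ] A) ⋆[mul ℝ ℝ] S) x = (H ⋆[mul ℝ ℝ] (A ⋆[mul ℝ ℝ] S)) x := by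
    filter_upwards [iH.norm.ae_convolution_exists (mul ℝ ℝ)
      (iA.norm.integrable_convolution (mul ℝ ℝ) iS.norm)] with x hx
    exact convolution_assoc (mul ℝ ℝ) (mul ℝ ℝ) (mul ℝ ℝ) (mul ℝ ℝ)
      (fun a b c => mul_assoc a b c) iH.aestronglyMeasurable iA.aestronglyMeasurable
      iS.aestronglyMeasurable (iH.ae_convolution_exists (mul ℝ ℝ) iA)
      (iA.norm.ae_convolution_exists (mul ℝ ℝ) iS.norm) hx
  have HAcomm : (H ⋆[mul ℝ ℝ] A) = (A ⋆[mul ℝ ℝ] H) := funext fun x => conv_comm' H A x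
  -- STEP A
  have stepA : ∀ᵐ t ∂(volume.restrict (Ioo (0:ℝ) T)),
      (B ⋆[mul ℝ ℝ] H) t = k - k * ∫ σ in Ioo (0:ℝ) t, h σ := by
    filter_upwards [ae_restrict_mem hI, ae_restrict_of_ae exBH, ae_restrict_of_ae exBHA,
      ae_restrict_of_ae assoc1] with t htI exBHt exBHAt assoc1t
    have h1 : Integrable (fun σ => B σ * H (t - σ)) volume := by
      have := exBHt.integrable; simpa only [mul_apply'] using this
    have h2 : Integrable (fun σ => B σ * (H ⋆[mul ℝ ℝ] A) (t - σ)) volume := by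
      have := exBHAt.integrable; simpa only [mul_apply'] using this
    have hsplit : (∫ σ, B σ * (H (t - σ) + k * (H ⋆[mul ℝ ℝ] A) (t - σ)))
        = (B ⋆[mul ℝ ℝ] H) t + k * (B ⋆[mul ℝ ℝ] (H ⋆[mul ℝ ℝ] A)) t := by
      have e1 : (fun σ => B σ * (H (t - σ) + k * (H ⋆[mul ℝ ℝ] A) (t - σ)))
          = fun σ => B σ * H (t - σ) + k * (B σ * (H ⋆[mul ℝ ℝ] A) (t - σ)) := by
        funext σ; ring
      rw [e1, integral_add h1 (h2.const_mul k), integral_const_mul k]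
      simp only [convolution_def, mul_apply']
    have hcongr : (∫ σ, B σ * (H (t - σ) + k * (H ⋆[mul ℝ ℝ] A) (t - σ)))
        = ∫ σ, B σ * (k * A (t - σ)) := by
      refine integral_congr_ae ?_
      filter_upwards [(quasiMeasurePreserving_sub_left_of_right_invariant volume t).ae hZ]
        with σ hσ
      rcases lt_or_ge (t - σ) T with hlt | hge
      · rw [hσ hlt]
      · have hσ0 : σ ≤ 0 := by have := htI.2; linarith
        rw [vB σ hσ0, zero_mul, zero_mul]
    have hr : (∫ σ, B σ * (k * A (t - σ))) = k * (B ⋆[mul ℝ ℝ] A) t := by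
      have e1 : (fun σ => B σ * (k * A (t - σ))) = fun σ => k * (B σ * A (t - σ)) := by
        funext σ; ring
      rw [e1, integral_const_mul k]
      simp only [convolution_def, mul_apply']
    have key : (B ⋆[mul ℝ ℝ] H) t + k * (B ⋆[mul ℝ ℝ] (H ⋆[mul ℝ ℝ] A)) t = k := by
      rw [← hsplit, hcongr, hr, kerBA t htI, mul_one]
    have hIh : ((B ⋆[mul ℝ ℝ] A) ⋆[mul ℝ ℝ] H) t = ∫ σ in Ioo (0:ℝ) t, h σ := by
      rw [conv_comm']
      have e1 : ∀ σ, H σ * (B ⋆[mul ℝ ℝ] A) (t - σ) = (Ioo (0:ℝ) t).indicator h σ := by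
        intro σ
        by_cases hσt : σ ∈ Ioo (0:ℝ) t
        · rw [indicator_of_mem hσt, hH,
            indicator_of_mem (show σ ∈ Ioo (0:ℝ) T from ⟨hσt.1, hσt.2.trans htI.2⟩),
            kerBA (t - σ) ⟨sub_pos.2 hσt.2, by have := hσt.1; have := htI.2; linarith⟩, mul_one]
        · rw [indicator_of_notMem hσt]
          rcases le_or_gt σ 0 with h0 | h0
          · rw [vH σ h0, zero_mul]
          · have hts : t - σ ≤ 0 := by
              have : t ≤ σ := by
                by_contra hc; exact hσt ⟨h0, not_le.1 hc⟩
              linarith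
            rw [vBA (t - σ) hts, mul_zero]
      show (∫ σ, H σ * (B ⋆[mul ℝ ℝ] A) (t - σ)) = _
      simp_rw [e1]
      rw [integral_indicator measurableSet_Ioo]
    rw [HAcomm] at key
    rw [← assoc1t, hIh] at key
    linarith
  -- STEP B
  have stepB : ∀ᵐ t ∂(volume.restrict (Ioo (0:ℝ) T)),
      (H ⋆[mul ℝ ℝ] S) t + k * (H ⋆[mul ℝ ℝ] (A ⋆[mul ℝ ℝ] S)) t
        = ∫ σ in Ioo (0:ℝ) t, h σ := by
    filter_upwards [ae_restrict_mem hI, ae_restrict_of_ae exHS, ae_restrict_of_ae exHAS]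
      with t htI e1 e2
    have h1 : Integrable (fun σ => H σ * S (t - σ)) volume := by
      have := e1.integrable; simpa only [mul_apply'] using this
    have h2 : Integrable (fun σ => H σ * (A ⋆[mul ℝ ℝ] S) (t - σ)) volume := by
      have := e2.integrable; simpa only [mul_apply'] using this
    have hsplit : (∫ σ, H σ * (S (t - σ) + k * (A ⋆[mul ℝ ℝ] S) (t - σ)))
        = (H ⋆[mul ℝ ℝ] S) t + k * (H ⋆[mul ℝ ℝ] (A ⋆[mul ℝ ℝ] S)) t := by
      have e3 : (fun σ => H σ * (S (t - σ) + k * (A ⋆[mul ℝ ℝ] S) (t - σ)))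
          = fun σ => H σ * S (t - σ) + k * (H σ * (A ⋆[mul ℝ ℝ] S) (t - σ)) := by
        funext σ; ring
      rw [e3, integral_add h1 (h2.const_mul k), integral_const_mul k]
      simp only [convolution_def, mul_apply']
    have hcongr : (∫ σ, H σ * (S (t - σ) + k * (A ⋆[mul ℝ ℝ] S) (t - σ)))
        = ∫ σ, (Ioo (0:ℝ) t).indicator h σ := by
      refine integral_congr_ae ?_
      filter_upwards [(quasiMeasurePreserving_sub_left_of_right_invariant volume t).ae hYs]
        with σ hσ
      by_cases hσt : σ ∈ Ioo (0:ℝ) t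
      · have hmem : t - σ ∈ Ioo (0:ℝ) T :=
          ⟨sub_pos.2 hσt.2, by have := hσt.1; have := htI.2; linarith⟩
        rw [hσ hmem, indicator_of_mem hσt, hH,
          indicator_of_mem (show σ ∈ Ioo (0:ℝ) T from ⟨hσt.1, hσt.2.trans htI.2⟩), mul_one]
      · rw [indicator_of_notMem hσt]
        rcases le_or_gt σ 0 with h0 | h0
        · rw [vH σ h0, zero_mul]
        · have hts : t - σ ≤ 0 := by
            have : t ≤ σ := by by_contra hc; exact hσt ⟨h0, not_le.1 hc⟩
            linarith
          rw [vS (t - σ) hts, vAS (t - σ) hts, mul_zero, add_zero, mul_zero]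
    rw [← hsplit, hcongr, integral_indicator measurableSet_Ioo]
  -- STEP C
  have stepC : ∀ᵐ t ∂(volume.restrict (Ioo (0:ℝ) T)),
      (H ⋆[mul ℝ ℝ] S) t + k * ((H ⋆[mul ℝ ℝ] A) ⋆[mul ℝ ℝ] S) t
        = k * (A ⋆[mul ℝ ℝ] S) t := by
    filter_upwards [ae_restrict_mem hI, ae_restrict_of_ae exHS, ae_restrict_of_ae exHA_S]
      with t htI e1 e2
    have h1 : Integrable (fun σ => H σ * S (t - σ)) volume := by
      have := e1.integrable; simpa only [mul_apply'] using this
    have h2 : Integrable (fun σ => (H ⋆[mul ℝ ℝ] A) σ * S (t - σ)) volume := by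
      have := e2.integrable; simpa only [mul_apply'] using this
    have hsplit : (∫ σ, (H σ + k * (H ⋆[mul ℝ ℝ] A) σ) * S (t - σ))
        = (H ⋆[mul ℝ ℝ] S) t + k * ((H ⋆[mul ℝ ℝ] A) ⋆[mul ℝ ℝ] S) t := by
      have e3 : (fun σ => (H σ + k * (H ⋆[mul ℝ ℝ] A) σ) * S (t - σ))
          = fun σ => H σ * S (t - σ) + k * ((H ⋆[mul ℝ ℝ] A) σ * S (t - σ)) := by
        funext σ; ring
      rw [e3, integral_add h1 (h2.const_mul k), integral_const_mul k]
      simp only [convolution_def, mul_apply']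
    have hcongr : (∫ σ, (H σ + k * (H ⋆[mul ℝ ℝ] A) σ) * S (t - σ))
        = ∫ σ, k * (A σ * S (t - σ)) := by
      refine integral_congr_ae ?_
      filter_upwards [hZ] with σ hσ
      rcases lt_or_ge σ T with hlt | hge
      · rw [hσ hlt]; ring
      · have hts : t - σ ≤ 0 := by have := htI.2; linarith
        rw [vS (t - σ) hts, mul_zero, mul_zero, mul_zero]
    have hr : (∫ σ, k * (A σ * S (t - σ))) = k * (A ⋆[mul ℝ ℝ] S) t := by
      rw [integral_const_mul k]
      simp only [convolution_def, mul_apply']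
    rw [← hsplit, hcongr, hr]
  -- conclusion
  filter_upwards [stepA, stepB, stepC, ae_restrict_of_ae assoc2, hVs, ae_restrict_mem hI]
    with t hA' hB' hC' hassoc hvs htI
  have hkAS : k * (A ⋆[mul ℝ ℝ] S) t = ∫ σ in Ioo (0:ℝ) t, h σ := by
    rw [hassoc] at hC'
    linarith
  have hst : s t = 1 - k * (A ⋆[mul ℝ ℝ] S) t := by
    rw [conv_eq_conv (rlKernel α) s htI] at hvs
    linarith
  rw [conv_eq_conv (rlKernel (1 - α)) h htI, hA', hst, hkAS]
  ring
end
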